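/- arXiv:2111.07387 — 8 statements merged into one kernel-verified Lean document; each statement's English description precedes it below -/
import Mathlib

section
/- Let d ≥ 1, let B : ℝ^d → ℝ^{d×d} be a continuously differentiable structure matrix, let H, Ĥ_1, …, Ĥ_m : ℝ^d → ℝ be of class C², and let g_1, …, g_m : ℝ → ℝ be continuous. Suppose φ : [0,∞) × ℝ^d → ℝ^d is of class C² and satisfies φ(0,y) = y for all y and ∂_t φ(t,y) = B(φ(t,y)) (∇H(φ(t,y)) + Σ_{k=1}^m g_k(t) ∇Ĥ_k(φ(t,y))) for all t ≥ 0 and y ∈ ℝ^d. Then for every t ≥ 0 the map φ(t,·) is a Poisson map for B, i.e. D_yφ(t,y) · B(y) · (D_yφ(t,y))^T = B(φ(t,y)) for all y ∈ ℝ^d, where D_yφ(t,y) denotes the Jacobian matrix of φ(t,·) at y. (The case g_1 = … = g_m = 0 is the statement that the flow of a deterministic Poisson system ẏ = B(y)∇H(y) is a Poisson map; the general case is the Poisson map property of the flow of the multiscale system with smooth noise.) -/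
open Set

section auxslice
variable {E F : Type*} [NormedAddCommGroup E] [NormedSpace ℝ E]
  [NormedAddCommGroup F] [NormedSpace ℝ F]

theorem aux_slice_space {s : Set ℝ} {ψ : ℝ × E → F} {L : ℝ × E →L[ℝ] F}
    {t : ℝ} (ht : t ∈ s) {y : E} (h : HasFDerivWithinAt ψ L (s ×ˢ (univ : Set E)) (t, y)) :
    HasFDerivAt (fun z => ψ (t, z)) (L.comp (ContinuousLinearMap.inr ℝ ℝ E)) y := by
  have h2 : HasFDerivAt (fun z : E => ((t, z) : ℝ × E)) (ContinuousLinearMap.inr ℝ ℝ E) y :=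
    HasFDerivAt.prodMk (hasFDerivAt_const t y) (hasFDerivAt_id y)
  have h3 := h.comp (s := (univ : Set E)) y h2.hasFDerivWithinAt
    (fun z _ => mem_prod.2 ⟨ht, trivial⟩)
  rwa [hasFDerivWithinAt_univ] at h3

theorem aux_slice_time {s : Set ℝ} {ψ : ℝ × E → F} {L : ℝ × E →L[ℝ] F}
    {t : ℝ} {y : E} (h : HasFDerivWithinAt ψ L (s ×ˢ (univ : Set E)) (t, y)) :
    HasDerivWithinAt (fun τ => ψ (τ, y)) (L (1, 0)) s t := by
  have h2 : HasDerivWithinAt (fun τ : ℝ => ((τ, y) : ℝ × E)) (1, 0) s t :=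
    (HasDerivAt.prodMk (hasDerivAt_id t) (hasDerivAt_const t y)).hasDerivWithinAt
  exact h.comp_hasDerivWithinAt t h2 (fun τ hτ => mem_prod.2 ⟨hτ, mem_univ _⟩)

theorem aux_hess_symm {f : E → ℝ} (hf : ContDiff ℝ 2 f) (x : E) (u w : E) :
    fderiv ℝ (fun z => fderiv ℝ f z u) x w = fderiv ℝ (fun z => fderiv ℝ f z w) x u := by
  have hd : Differentiable ℝ (fderiv ℝ f) :=
    (hf.fderiv_right (le_refl _)).differentiable one_ne_zero
  have key : ∀ a b : E, fderiv ℝ (fun z => fderiv ℝ f z a) x b = fderiv ℝ (fderiv ℝ f) x b a := by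
    intro a b
    rw [fderiv_clm_apply (hd.differentiableAt) (differentiableAt_const a)]
    simp
  rw [key, key]
  exact second_derivative_symmetric (fun z => (hf.differentiable two_ne_zero z).hasFDerivAt)
    (hd.differentiableAt).hasFDerivAt w u

theorem aux_clm_expand {n : ℕ} (L : (Fin n → ℝ) →L[ℝ] ℝ) (x : Fin n → ℝ) :
    L x = ∑ l, x l * L (Pi.single l 1) := by
  have hx : x = ∑ l, x l • (Pi.single l 1 : Fin n → ℝ) := by
    funext j
    simp [Pi.single_apply, Finset.sum_apply]
  conv_lhs => rw [hx]
  rw [map_sum]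
  simp [smul_eq_mul]
end auxslice

theorem aux_f_hasFDerivAt {n : ℕ} {B : (Fin n → ℝ) → Fin n → Fin n → ℝ} (hB : ContDiff ℝ 1 B)
    {V : (Fin n → ℝ) → Fin n → ℝ} (hV : ∀ j, ContDiff ℝ 1 (fun x => V x j)) (i : Fin n)
    (x : Fin n → ℝ) :
    HasFDerivAt (fun z => ∑ j, B z i j * V z j)
      (∑ j, (B x i j • fderiv ℝ (fun z => V z j) x + V x j • fderiv ℝ (fun z => B z i j) x)) x := by
  have hBij : ∀ a b, ContDiff ℝ 1 (fun z => B z a b) := fun a b =>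
    (contDiff_pi.mp ((contDiff_pi.mp hB) a)) b
  exact HasFDerivAt.fun_sum fun j _ =>
    ((hBij i j).differentiable one_ne_zero x).hasFDerivAt.mul
      (((hV j).differentiable one_ne_zero x).hasFDerivAt)
open Set

noncomputable def auxV {d m : ℕ} (H : (Fin d → ℝ) → ℝ) (Hhat : Fin m → (Fin d → ℝ) → ℝ)
    (g : Fin m → ℝ → ℝ) (s : ℝ) (x : Fin d → ℝ) (j : Fin d) : ℝ :=
  fderiv ℝ H x (Pi.single j 1) + ∑ k, g k s * fderiv ℝ (Hhat k) x (Pi.single j 1)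

noncomputable def auxf {d m : ℕ} (B : (Fin d → ℝ) → Fin d → Fin d → ℝ)
    (H : (Fin d → ℝ) → ℝ) (Hhat : Fin m → (Fin d → ℝ) → ℝ) (g : Fin m → ℝ → ℝ)
    (s : ℝ) (x : Fin d → ℝ) (i : Fin d) : ℝ :=
  ∑ j, B x i j * auxV H Hhat g s x j

noncomputable def auxA {d m : ℕ} (B : (Fin d → ℝ) → Fin d → Fin d → ℝ)
    (H : (Fin d → ℝ) → ℝ) (Hhat : Fin m → (Fin d → ℝ) → ℝ) (g : Fin m → ℝ → ℝ)
    (x : Fin d → ℝ) (s : ℝ) (i l : Fin d) : ℝ :=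
  ∑ j, (B x i j * fderiv ℝ (fun z => auxV H Hhat g s z j) x (Pi.single l 1)
    + auxV H Hhat g s x j * fderiv ℝ (fun z => B z i j) x (Pi.single l 1))

section basic
variable {d m : ℕ} {B : (Fin d → ℝ) → Fin d → Fin d → ℝ}
  {H : (Fin d → ℝ) → ℝ} {Hhat : Fin m → (Fin d → ℝ) → ℝ} {g : Fin m → ℝ → ℝ}

theorem auxV_contDiff (hH : ContDiff ℝ 2 H) (hHhat : ∀ k, ContDiff ℝ 2 (Hhat k)) (s : ℝ)
    (j : Fin d) : ContDiff ℝ 1 (fun x => auxV H Hhat g s x j) := by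
  unfold auxV
  exact ((hH.fderiv_right (le_refl _)).clm_apply contDiff_const).add
    (ContDiff.sum fun k _ => contDiff_const.mul
      (((hHhat k).fderiv_right (le_refl _)).clm_apply contDiff_const))

theorem auxf_hasFDerivAt (hB : ContDiff ℝ 1 B) (hH : ContDiff ℝ 2 H)
    (hHhat : ∀ k, ContDiff ℝ 2 (Hhat k)) (s : ℝ) (i : Fin d) (x : Fin d → ℝ) :
    HasFDerivAt (fun z => auxf B H Hhat g s z i)
      (∑ j, (B x i j • fderiv ℝ (fun z => auxV H Hhat g s z j) x
        + auxV H Hhat g s x j • fderiv ℝ (fun z => B z i j) x)) x := by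
  have hBij : ∀ a b, ContDiff ℝ 1 (fun z => B z a b) := fun a b =>
    (contDiff_pi.mp ((contDiff_pi.mp hB) a)) b
  exact HasFDerivAt.fun_sum fun j _ =>
    ((hBij i j).differentiable one_ne_zero x).hasFDerivAt.mul
      (((auxV_contDiff hH hHhat s j).differentiable one_ne_zero x).hasFDerivAt)
end basic

theorem aux_variational {d m : ℕ} {B : (Fin d → ℝ) → Fin d → Fin d → ℝ}
    {H : (Fin d → ℝ) → ℝ} {Hhat : Fin m → (Fin d → ℝ) → ℝ} {g : Fin m → ℝ → ℝ}
    (hB : ContDiff ℝ 1 B) (hH : ContDiff ℝ 2 H) (hHhat : ∀ k, ContDiff ℝ 2 (Hhat k))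
    {φ : ℝ → (Fin d → ℝ) → Fin d → ℝ}
    (hφ : ContDiffOn ℝ 2 (fun p : ℝ × (Fin d → ℝ) => φ p.1 p.2) (Set.Ici (0:ℝ) ×ˢ Set.univ))
    (hode : ∀ s ∈ Set.Ici (0:ℝ), ∀ z a, HasDerivWithinAt (fun τ => φ τ z a)
      (auxf B H Hhat g s (φ s z) a) (Set.Ici (0:ℝ)) s)
    (y : Fin d → ℝ) (s : ℝ) (hs : s ∈ Set.Ici (0:ℝ)) (i k : Fin d) :
    HasDerivWithinAt (fun τ => fderiv ℝ (fun z => φ τ z i) y (Pi.single k 1))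
      (∑ l, auxA B H Hhat g (φ s y) s i l * fderiv ℝ (fun z => φ s z l) y (Pi.single k 1))
      (Set.Ici (0:ℝ)) s := by
  have hs' : (0:ℝ) ≤ s := hs
  set S : Set (ℝ × (Fin d → ℝ)) := Set.Ici (0:ℝ) ×ˢ Set.univ with hSdef
  have hS : UniqueDiffOn ℝ S := (uniqueDiffOn_Ici 0).prod uniqueDiffOn_univ
  have hcl : ∀ p ∈ S, p ∈ closure (interior S) := by
    intro p hp
    rw [hSdef, interior_prod_eq, interior_Ici, interior_univ, closure_prod_eq, closure_Ioi,
      closure_univ]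
    exact hp
  have hψ : ∀ a, ContDiffOn ℝ 2 (fun p : ℝ × (Fin d → ℝ) => φ p.1 p.2 a) S :=
    fun a => (contDiffOn_pi.mp hφ) a
  set Fi : Fin d → (ℝ × (Fin d → ℝ)) → (ℝ × (Fin d → ℝ)) →L[ℝ] ℝ :=
    fun a => fderivWithin ℝ (fun p : ℝ × (Fin d → ℝ) => φ p.1 p.2 a) S with hFidef
  have hFiC : ∀ a, ContDiffOn ℝ 1 (Fi a) S := fun a => (hψ a).fderivWithin hS (by norm_num)
  have hFiat : ∀ a, ∀ p ∈ S,
      HasFDerivWithinAt (fun p : ℝ × (Fin d → ℝ) => φ p.1 p.2 a) (Fi a p) S p :=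
    fun a p hp => ((hψ a).differentiableOn two_ne_zero p hp).hasFDerivWithinAt
  have hslice : ∀ (a : Fin d) (τ : ℝ), (0:ℝ) ≤ τ → ∀ z, HasFDerivAt (fun z' => φ τ z' a)
      ((Fi a (τ, z)).comp (ContinuousLinearMap.inr ℝ ℝ (Fin d → ℝ))) z :=
    fun a τ hτ z => aux_slice_space hτ (hFiat a (τ, z) ⟨hτ, trivial⟩)
  have hJF : ∀ (a b : Fin d) (τ : ℝ), (0:ℝ) ≤ τ →
      fderiv ℝ (fun z => φ τ z a) y (Pi.single b 1) = Fi a (τ, y) (0, Pi.single b 1) := by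
    intro a b τ hτ
    rw [(hslice a τ hτ y).fderiv]
    rfl
  have hFt : ∀ (a : Fin d), ∀ p ∈ S, Fi a p (1, 0) = auxf B H Hhat g p.1 (φ p.1 p.2) a := by
    rintro a ⟨τ, z⟩ hp
    have h1 : HasDerivWithinAt (fun σ => φ σ z a) (Fi a (τ, z) (1, 0)) (Set.Ici 0) τ :=
      aux_slice_time (hFiat a (τ, z) hp)
    exact (uniqueDiffOn_Ici 0 τ hp.1).eq_deriv _ h1 (hode τ hp.1 z a)
  have hp : (s, y) ∈ S := ⟨hs', trivial⟩
  -- the contraction maps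
  have comp1 : ∀ v : ℝ × (Fin d → ℝ),
      fderivWithin ℝ (fun q => Fi i q v) S (s, y)
        = (ContinuousLinearMap.apply ℝ ℝ v).comp (fderivWithin ℝ (Fi i) S (s, y)) := by
    intro v
    have heq : (fun q => Fi i q v) = (ContinuousLinearMap.apply ℝ ℝ v) ∘ (Fi i) := rfl
    rw [heq, fderiv_comp_fderivWithin _ (ContinuousLinearMap.apply ℝ ℝ v).differentiableAt
      ((hFiC i).differentiableOn one_ne_zero _ hp) (hS _ hp), ContinuousLinearMap.fderiv]
  have hG1C : ContDiffOn ℝ 1 (fun q => Fi i q ((0:ℝ), (Pi.single k 1 : Fin d → ℝ))) S :=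
    (ContinuousLinearMap.apply ℝ ℝ ((0:ℝ), (Pi.single k 1 : Fin d → ℝ))).contDiff.comp_contDiffOn
      (hFiC i)
  have hder : HasDerivWithinAt (fun τ => Fi i (τ, y) ((0:ℝ), (Pi.single k 1 : Fin d → ℝ)))
      (fderivWithin ℝ (fun q => Fi i q ((0:ℝ), (Pi.single k 1 : Fin d → ℝ))) S (s, y) (1, 0))
      (Set.Ici 0) s :=
    aux_slice_time (hG1C.differentiableOn one_ne_zero _ hp).hasFDerivWithinAt
  have hJcongr : HasDerivWithinAt (fun τ => fderiv ℝ (fun z => φ τ z i) y (Pi.single k 1))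
      (fderivWithin ℝ (fun q => Fi i q ((0:ℝ), (Pi.single k 1 : Fin d → ℝ))) S (s, y) (1, 0))
      (Set.Ici 0) s :=
    hder.congr (fun τ hτ => hJF i k τ hτ) (hJF i k s hs')
  -- symmetry of second derivative
  have sym := ((hψ i) (s, y) hp).isSymmSndFDerivWithinAt (by simp) hS (hcl _ hp) hp
  -- G2 -> G3
  have hG2diff : DifferentiableWithinAt ℝ (fun q => Fi i q ((1:ℝ), (0 : Fin d → ℝ))) S (s, y) :=
    ((ContinuousLinearMap.apply ℝ ℝ ((1:ℝ), (0 : Fin d → ℝ))).contDiff.comp_contDiffOn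
      (hFiC i)).differentiableOn one_ne_zero _ hp
  have hG3eq : ∀ q ∈ S, auxf B H Hhat g q.1 (φ q.1 q.2) i = Fi i q ((1:ℝ), (0 : Fin d → ℝ)) :=
    fun q hq => (hFt i q hq).symm
  have hG3diff : DifferentiableWithinAt ℝ (fun q => auxf B H Hhat g q.1 (φ q.1 q.2) i) S (s, y) :=
    hG2diff.congr hG3eq (hG3eq _ hp)
  have e3 : fderivWithin ℝ (fun q => Fi i q ((1:ℝ), (0 : Fin d → ℝ))) S (s, y)
      = fderivWithin ℝ (fun q => auxf B H Hhat g q.1 (φ q.1 q.2) i) S (s, y) :=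
    (fderivWithin_congr hG3eq (hG3eq _ hp)).symm
  -- spatial slice of G3 and chain rule
  have h5 : HasFDerivAt (fun z => auxf B H Hhat g s (φ s z) i)
      ((fderivWithin ℝ (fun q => auxf B H Hhat g q.1 (φ q.1 q.2) i) S (s, y)).comp
        (ContinuousLinearMap.inr ℝ ℝ (Fin d → ℝ))) y :=
    aux_slice_space hs' hG3diff.hasFDerivWithinAt
  have hDφ : DifferentiableAt ℝ (fun z => φ s z) y :=
    differentiableAt_pi.2 (fun a => (hslice a s hs' y).differentiableAt)
  have chainF : HasFDerivAt (fun z => auxf B H Hhat g s (φ s z) i)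
      ((∑ j', (B (φ s y) i j' • fderiv ℝ (fun z => auxV H Hhat g s z j') (φ s y)
        + auxV H Hhat g s (φ s y) j' • fderiv ℝ (fun z => B z i j') (φ s y))).comp
        (fderiv ℝ (fun z => φ s z) y)) y := by
    have := (auxf_hasFDerivAt (g := g) hB hH hHhat s i (φ s y)).comp y hDφ.hasFDerivAt
    simpa [Function.comp_def] using this
  have huniq := h5.unique chainF
  -- value computation
  have hval : fderivWithin ℝ (fun q => Fi i q ((0:ℝ), (Pi.single k 1 : Fin d → ℝ))) S (s, y) (1, 0)
      = ∑ l, auxA B H Hhat g (φ s y) s i l * fderiv ℝ (fun z => φ s z l) y (Pi.single k 1) := by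
    rw [comp1]
    have step1 : (ContinuousLinearMap.apply ℝ ℝ ((0:ℝ), (Pi.single k 1 : Fin d → ℝ))).comp
        (fderivWithin ℝ (Fi i) S (s, y)) (1, 0)
        = fderivWithin ℝ (Fi i) S (s, y) (1, 0) ((0:ℝ), (Pi.single k 1 : Fin d → ℝ)) := rfl
    rw [step1, sym (1, 0) ((0:ℝ), (Pi.single k 1 : Fin d → ℝ))]
    have step2 : fderivWithin ℝ (Fi i) S (s, y) ((0:ℝ), (Pi.single k 1 : Fin d → ℝ)) (1, 0)
        = fderivWithin ℝ (fun q => Fi i q ((1:ℝ), (0 : Fin d → ℝ))) S (s, y)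
          ((0:ℝ), (Pi.single k 1 : Fin d → ℝ)) := by
      rw [comp1]; rfl
    rw [step2, e3]
    have step3 : fderivWithin ℝ (fun q => auxf B H Hhat g q.1 (φ q.1 q.2) i) S (s, y)
        ((0:ℝ), (Pi.single k 1 : Fin d → ℝ))
        = ((fderivWithin ℝ (fun q => auxf B H Hhat g q.1 (φ q.1 q.2) i) S (s, y)).comp
          (ContinuousLinearMap.inr ℝ ℝ (Fin d → ℝ))) (Pi.single k 1) := rfl
    rw [step3, huniq]
    have step4 : (∑ j', (B (φ s y) i j' • fderiv ℝ (fun z => auxV H Hhat g s z j') (φ s y)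
        + auxV H Hhat g s (φ s y) j' • fderiv ℝ (fun z => B z i j') (φ s y))).comp
        (fderiv ℝ (fun z => φ s z) y) (Pi.single k 1)
        = (∑ j', (B (φ s y) i j' • fderiv ℝ (fun z => auxV H Hhat g s z j') (φ s y)
          + auxV H Hhat g s (φ s y) j' • fderiv ℝ (fun z => B z i j') (φ s y)))
          (fderiv ℝ (fun z => φ s z) y (Pi.single k 1)) := rfl
    rw [step4, aux_clm_expand]
    refine Finset.sum_congr rfl fun l _ => ?_
    have hpi : fderiv ℝ (fun z => φ s z) y (Pi.single k 1) l
        = fderiv ℝ (fun z => φ s z l) y (Pi.single k 1) := by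
      rw [fderiv_pi (fun a => (hslice a s hs' y).differentiableAt)]
      rfl
    rw [hpi]
    have hAval : (∑ j', (B (φ s y) i j' • fderiv ℝ (fun z => auxV H Hhat g s z j') (φ s y)
        + auxV H Hhat g s (φ s y) j' • fderiv ℝ (fun z => B z i j') (φ s y))) (Pi.single l 1)
        = auxA B H Hhat g (φ s y) s i l := by
      rw [ContinuousLinearMap.sum_apply]
      unfold auxA
      refine Finset.sum_congr rfl fun j' _ => ?_
      simp [smul_eq_mul]
    rw [hAval, mul_comm]
  rw [← hval]
  exact hJcongr

theorem aux_jacobi_alg {n : ℕ} (b : Fin n → Fin n → ℝ) (db : Fin n → Fin n → Fin n → ℝ)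
    (v : Fin n → ℝ) (w : Fin n → Fin n → ℝ)
    (hb : ∀ i j, b i j = - b j i) (hdb : ∀ i j l, db i j l = - db j i l)
    (hw : ∀ j l, w j l = w l j)
    (hjac : ∀ i j k, ∑ l, (db i j l * b l k + db j k l * b l i + db k i l * b l j) = 0)
    (i j : Fin n) :
    ∑ l, (∑ p, b l p * v p) * db i j l
      = (∑ l, (∑ q, (b i q * w q l + v q * db i q l)) * b l j)
        + ∑ l, b i l * (∑ q, (b j q * w q l + v q * db j q l)) := by
  have key : ∀ q, (∑ l, (db i q l * b l j + b i l * db j q l)) = ∑ l, db i j l * b l q := by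
    intro q
    have h1 : ∑ l, (db i q l * b l j + db q j l * b l i + db j i l * b l q) = 0 := hjac i q j
    have h4 : ∑ l, (db i q l * b l j + b i l * db j q l + -(db i j l * b l q)) = 0 := by
      rw [← h1]
      refine Finset.sum_congr rfl fun l _ => ?_
      rw [hdb q j, hb l i, hdb j i]; ring
    rw [Finset.sum_add_distrib, Finset.sum_add_distrib, Finset.sum_neg_distrib] at h4
    rw [Finset.sum_add_distrib]
    linarith [h4]
  have wzero : ((∑ l, ∑ q, b i q * w q l * b l j) + ∑ l, ∑ q, b i l * (b j q * w q l)) = 0 := by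
    have hswap : (∑ l, ∑ q, b i l * (b j q * w q l)) = ∑ l, ∑ q, b i q * (b j l * w q l) := by
      rw [Finset.sum_comm]
      exact Finset.sum_congr rfl fun l _ => Finset.sum_congr rfl fun q _ => by rw [hw l q]
    rw [hswap, ← Finset.sum_add_distrib]
    apply Finset.sum_eq_zero
    intro l _
    rw [← Finset.sum_add_distrib]
    apply Finset.sum_eq_zero
    intro q _
    rw [hb l j]; ring
  have RHS1 : (∑ l, (∑ q, (b i q * w q l + v q * db i q l)) * b l j)
      = (∑ l, ∑ q, b i q * w q l * b l j) + ∑ l, ∑ q, v q * (db i q l * b l j) := by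
    rw [← Finset.sum_add_distrib]
    refine Finset.sum_congr rfl fun l _ => ?_
    rw [Finset.sum_mul, ← Finset.sum_add_distrib]
    exact Finset.sum_congr rfl fun q _ => by ring
  have RHS2 : (∑ l, b i l * (∑ q, (b j q * w q l + v q * db j q l)))
      = (∑ l, ∑ q, b i l * (b j q * w q l)) + ∑ l, ∑ q, v q * (b i l * db j q l) := by
    rw [← Finset.sum_add_distrib]
    refine Finset.sum_congr rfl fun l _ => ?_
    rw [Finset.mul_sum, ← Finset.sum_add_distrib]
    exact Finset.sum_congr rfl fun q _ => by ring
  rw [RHS1, RHS2]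
  have dbpart : ((∑ l, ∑ q, v q * (db i q l * b l j)) + ∑ l, ∑ q, v q * (b i l * db j q l))
      = ∑ l, (∑ p, b l p * v p) * db i j l := by
    rw [← Finset.sum_add_distrib]
    have step1 : (∑ l, ((∑ q, v q * (db i q l * b l j)) + ∑ q, v q * (b i l * db j q l)))
        = ∑ l, ∑ q, v q * (db i q l * b l j + b i l * db j q l) := by
      refine Finset.sum_congr rfl fun l _ => ?_
      rw [← Finset.sum_add_distrib]
      exact Finset.sum_congr rfl fun q _ => by ring
    rw [step1, Finset.sum_comm]
    have step2 : (∑ q, ∑ l, v q * (db i q l * b l j + b i l * db j q l))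
        = ∑ q, v q * ∑ l, db i j l * b l q := by
      refine Finset.sum_congr rfl fun q _ => ?_
      rw [← Finset.mul_sum, key q]
    rw [step2]
    have step3 : (∑ q, v q * ∑ l, db i j l * b l q) = ∑ q, ∑ l, db i j l * b l q * v q := by
      refine Finset.sum_congr rfl fun q _ => ?_
      rw [Finset.mul_sum]
      exact Finset.sum_congr rfl fun l _ => by ring
    rw [step3, Finset.sum_comm]
    refine Finset.sum_congr rfl fun l _ => ?_
    rw [Finset.sum_mul]
    exact Finset.sum_congr rfl fun q _ => by ring
  linarith [wzero, dbpart]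

theorem aux_M_alg {n : ℕ} (A J b : Fin n → Fin n → ℝ) (i j : Fin n) :
    ∑ k, ∑ l, ((∑ p, A i p * J p k) * b k l * J j l + J i k * b k l * (∑ p, A j p * J p l))
      = (∑ p, A i p * (∑ k, ∑ l, J p k * b k l * J j l))
        + ∑ p, (∑ k, ∑ l, J i k * b k l * J p l) * A j p := by
  have expand : ∀ k l, ((∑ p, A i p * J p k) * b k l * J j l + J i k * b k l * (∑ p, A j p * J p l))
      = ∑ p, (A i p * (J p k * b k l * J j l) + (J i k * b k l * J p l) * A j p) := by
    intro k l
    rw [Finset.sum_mul, Finset.sum_mul, Finset.mul_sum, ← Finset.sum_add_distrib]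
    exact Finset.sum_congr rfl fun p _ => by ring
  calc ∑ k, ∑ l, ((∑ p, A i p * J p k) * b k l * J j l + J i k * b k l * (∑ p, A j p * J p l))
      = ∑ k, ∑ p, ∑ l, (A i p * (J p k * b k l * J j l) + (J i k * b k l * J p l) * A j p) := by
        refine Finset.sum_congr rfl fun k _ => ?_
        rw [← Finset.sum_comm]
        exact Finset.sum_congr rfl fun l _ => expand k l
    _ = ∑ p, ∑ k, ∑ l, (A i p * (J p k * b k l * J j l) + (J i k * b k l * J p l) * A j p) :=
        Finset.sum_comm
    _ = ∑ p, (A i p * (∑ k, ∑ l, J p k * b k l * J j l)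
          + (∑ k, ∑ l, J i k * b k l * J p l) * A j p) := by
        refine Finset.sum_congr rfl fun p _ => ?_
        rw [Finset.mul_sum, Finset.sum_mul, ← Finset.sum_add_distrib]
        refine Finset.sum_congr rfl fun k _ => ?_
        rw [Finset.mul_sum, Finset.sum_mul, ← Finset.sum_add_distrib]
    _ = _ := Finset.sum_add_distrib

section nder
variable {d m : ℕ} {B : (Fin d → ℝ) → Fin d → Fin d → ℝ}
  {H : (Fin d → ℝ) → ℝ} {Hhat : Fin m → (Fin d → ℝ) → ℝ} {g : Fin m → ℝ → ℝ}

theorem aux_V_fderiv_apply (hH : ContDiff ℝ 2 H) (hHhat : ∀ k, ContDiff ℝ 2 (Hhat k))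
    (s : ℝ) (x : Fin d → ℝ) (j : Fin d) (u : Fin d → ℝ) :
    fderiv ℝ (fun z => auxV H Hhat g s z j) x u
      = fderiv ℝ (fun z => fderiv ℝ H z (Pi.single j 1)) x u
        + ∑ k, g k s * fderiv ℝ (fun z => fderiv ℝ (Hhat k) z (Pi.single j 1)) x u := by
  have hHj : ∀ (F : (Fin d → ℝ) → ℝ), ContDiff ℝ 2 F →
      ContDiff ℝ 1 (fun z => fderiv ℝ F z (Pi.single j 1)) := fun F hF =>
    (hF.fderiv_right (le_refl _)).clm_apply contDiff_const
  have h1 : (fun z => auxV H Hhat g s z j)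
      = fun z => fderiv ℝ H z (Pi.single j 1)
        + ∑ k, g k s * fderiv ℝ (Hhat k) z (Pi.single j 1) := rfl
  have hd1 : DifferentiableAt ℝ (fun z => fderiv ℝ H z (Pi.single j 1)) x :=
    ((hHj H hH).differentiable one_ne_zero) x
  have hdk : ∀ k : Fin m, DifferentiableAt ℝ
      (fun z => g k s * fderiv ℝ (Hhat k) z (Pi.single j 1)) x := fun k =>
    (((hHj _ (hHhat k)).differentiable one_ne_zero) x).const_mul _
  have hd2 : DifferentiableAt ℝ
      (fun z => ∑ k, g k s * fderiv ℝ (Hhat k) z (Pi.single j 1)) x := by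
    exact DifferentiableAt.fun_sum (fun k _ => hdk k)
  rw [h1, fderiv_fun_add hd1 hd2, fderiv_fun_sum (fun k _ => hdk k)]
  have h3 : ∀ k : Fin m, fderiv ℝ (fun z => g k s * fderiv ℝ (Hhat k) z (Pi.single j 1)) x
      = g k s • fderiv ℝ (fun z => fderiv ℝ (Hhat k) z (Pi.single j 1)) x := fun k =>
    fderiv_const_mul (((hHj _ (hHhat k)).differentiable one_ne_zero) x) _
  simp only [ContinuousLinearMap.add_apply, ContinuousLinearMap.coe_sum', Finset.sum_apply]
  congr 1
  refine Finset.sum_congr rfl fun k _ => ?_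
  rw [h3 k]
  simp

theorem aux_W_symm (hH : ContDiff ℝ 2 H) (hHhat : ∀ k, ContDiff ℝ 2 (Hhat k))
    (s : ℝ) (x : Fin d → ℝ) (j l : Fin d) :
    fderiv ℝ (fun z => auxV H Hhat g s z j) x (Pi.single l 1)
      = fderiv ℝ (fun z => auxV H Hhat g s z l) x (Pi.single j 1) := by
  rw [aux_V_fderiv_apply hH hHhat, aux_V_fderiv_apply hH hHhat,
    aux_hess_symm hH x (Pi.single j 1) (Pi.single l 1)]
  congr 1
  exact Finset.sum_congr rfl fun k _ => by
    rw [aux_hess_symm (hHhat k) x (Pi.single j 1) (Pi.single l 1)]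

theorem aux_db_skew (hB : ContDiff ℝ 1 B) (hskew : ∀ y i j, B y i j = - B y j i)
    (x : Fin d → ℝ) (i j : Fin d) (u : Fin d → ℝ) :
    fderiv ℝ (fun z => B z i j) x u = - fderiv ℝ (fun z => B z j i) x u := by
  have h1 : (fun z => B z i j) = fun z => -B z j i := funext fun z => hskew z i j
  rw [h1, fderiv_fun_neg]
  simp

theorem aux_N_alg (hB : ContDiff ℝ 1 B) (hskew : ∀ y i j, B y i j = - B y j i)
    (hJacobi : ∀ y (i j k : Fin d),
      ∑ l, (fderiv ℝ (fun z => B z i j) y (Pi.single l 1) * B y l k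
        + fderiv ℝ (fun z => B z j k) y (Pi.single l 1) * B y l i
        + fderiv ℝ (fun z => B z k i) y (Pi.single l 1) * B y l j) = 0)
    (hH : ContDiff ℝ 2 H) (hHhat : ∀ k, ContDiff ℝ 2 (Hhat k))
    (s : ℝ) (x : Fin d → ℝ) (i j : Fin d) :
    ∑ l, auxf B H Hhat g s x l * fderiv ℝ (fun z => B z i j) x (Pi.single l 1)
      = (∑ l, auxA B H Hhat g x s i l * B x l j)
        + ∑ l, B x i l * auxA B H Hhat g x s j l := by
  have key := aux_jacobi_alg (B x)
    (fun a b l => fderiv ℝ (fun z => B z a b) x (Pi.single l 1))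
    (fun p => auxV H Hhat g s x p)
    (fun q l => fderiv ℝ (fun z => auxV H Hhat g s z q) x (Pi.single l 1))
    (hskew x) (fun a b l => aux_db_skew hB hskew x a b _)
    (fun q l => aux_W_symm hH hHhat s x q l)
    (fun a b c => hJacobi x a b c) i j
  unfold auxf auxA
  exact key

theorem aux_Nder (hB : ContDiff ℝ 1 B)
    {φ : ℝ → (Fin d → ℝ) → Fin d → ℝ}
    (hode : ∀ s ∈ Set.Ici (0:ℝ), ∀ z a, HasDerivWithinAt (fun τ => φ τ z a)
      (auxf B H Hhat g s (φ s z) a) (Set.Ici (0:ℝ)) s)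
    (y : Fin d → ℝ) (s : ℝ) (hs : s ∈ Set.Ici (0:ℝ)) (i j : Fin d) :
    HasDerivWithinAt (fun τ => B (φ τ y) i j)
      (∑ l, auxf B H Hhat g s (φ s y) l * fderiv ℝ (fun z => B z i j) (φ s y) (Pi.single l 1))
      (Set.Ici (0:ℝ)) s := by
  have hΦd : HasDerivWithinAt (fun τ => φ τ y) (fun l => auxf B H Hhat g s (φ s y) l)
      (Set.Ici 0) s := hasDerivWithinAt_pi.2 (fun l => hode s hs y l)
  have hBij : ∀ a b, ContDiff ℝ 1 (fun z => B z a b) := fun a b =>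
    (contDiff_pi.mp ((contDiff_pi.mp hB) a)) b
  have hBd : HasFDerivAt (fun x => B x i j) (fderiv ℝ (fun z => B z i j) (φ s y)) (φ s y) :=
    (((hBij i j).differentiable one_ne_zero) (φ s y)).hasFDerivAt
  have comp' := hBd.comp_hasDerivWithinAt s hΦd
  simp only [Function.comp_def] at comp'
  rw [aux_clm_expand] at comp'
  simpa using comp'

theorem aux_A_contOn (hB : ContDiff ℝ 1 B) (hH : ContDiff ℝ 2 H)
    (hHhat : ∀ k, ContDiff ℝ 2 (Hhat k)) (hg : ∀ k, Continuous (g k))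
    {Φ : ℝ → Fin d → ℝ} {u : Set ℝ} (hΦc : ContinuousOn Φ u) :
    ContinuousOn (fun τ => auxA B H Hhat g (Φ τ) τ) u := by
  rw [continuousOn_pi]; intro i
  rw [continuousOn_pi]; intro l
  have hBij : ∀ a b, ContDiff ℝ 1 (fun z => B z a b) := fun a b =>
    (contDiff_pi.mp ((contDiff_pi.mp hB) a)) b
  have hHj : ∀ (F : (Fin d → ℝ) → ℝ), ContDiff ℝ 2 F → ∀ j : Fin d,
      ContDiff ℝ 1 (fun z => fderiv ℝ F z (Pi.single j 1)) := fun F hF j =>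
    (hF.fderiv_right (le_refl _)).clm_apply contDiff_const
  have heq : (fun τ => auxA B H Hhat g (Φ τ) τ i l)
      = fun τ => ∑ j, (B (Φ τ) i j *
          (fderiv ℝ (fun z => fderiv ℝ H z (Pi.single j 1)) (Φ τ) (Pi.single l 1)
            + ∑ k, g k τ * fderiv ℝ (fun z => fderiv ℝ (Hhat k) z (Pi.single j 1)) (Φ τ)
              (Pi.single l 1))
        + (fderiv ℝ H (Φ τ) (Pi.single j 1)
            + ∑ k, g k τ * fderiv ℝ (Hhat k) (Φ τ) (Pi.single j 1))
          * fderiv ℝ (fun z => B z i j) (Φ τ) (Pi.single l 1)) := by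
    funext τ
    unfold auxA
    refine Finset.sum_congr rfl fun j _ => ?_
    rw [aux_V_fderiv_apply hH hHhat]
    rfl
  rw [heq]
  apply continuousOn_finset_sum
  intro j _
  have capply : ∀ (G : (Fin d → ℝ) → ((Fin d → ℝ) →L[ℝ] ℝ)) (w : Fin d → ℝ), Continuous G →
      Continuous (fun x => G x w) := fun G w hG =>
    (ContinuousLinearMap.apply ℝ ℝ w).continuous.comp hG
  have c1 : ContinuousOn (fun τ => B (Φ τ) i j) u :=
    ((hBij i j).continuous).comp_continuousOn hΦc
  have c2 : ContinuousOn (fun τ =>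
      fderiv ℝ (fun z => fderiv ℝ H z (Pi.single j 1)) (Φ τ) (Pi.single l 1)) u :=
    (capply _ _ ((hHj H hH j).continuous_fderiv one_ne_zero)).comp_continuousOn hΦc
  have c3 : ∀ k : Fin m, ContinuousOn (fun τ =>
      g k τ * fderiv ℝ (fun z => fderiv ℝ (Hhat k) z (Pi.single j 1)) (Φ τ) (Pi.single l 1)) u :=
    fun k => ((hg k).continuousOn).mul
      ((capply _ _ ((hHj _ (hHhat k) j).continuous_fderiv one_ne_zero)).comp_continuousOn hΦc)
  have c4 : ContinuousOn (fun τ => fderiv ℝ H (Φ τ) (Pi.single j 1)) u :=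
    ((hHj H hH j).continuous).comp_continuousOn hΦc
  have c5 : ∀ k : Fin m, ContinuousOn (fun τ =>
      g k τ * fderiv ℝ (Hhat k) (Φ τ) (Pi.single j 1)) u := fun k =>
    ((hg k).continuousOn).mul (((hHj _ (hHhat k) j).continuous).comp_continuousOn hΦc)
  have c6 : ContinuousOn (fun τ => fderiv ℝ (fun z => B z i j) (Φ τ) (Pi.single l 1)) u :=
    (capply _ _ ((hBij i j).continuous_fderiv one_ne_zero)).comp_continuousOn hΦc
  exact ((c1.mul (c2.add (continuousOn_finset_sum _ fun k _ => c3 k))).add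
    ((c4.add (continuousOn_finset_sum _ fun k _ => c5 k)).mul c6))
end nder

/-- The flow of a Poisson system `ẏ = B(y)(∇H(y) + Σₖ gₖ(t) ∇Ĥₖ(y))` (deterministic, or
multiscale with smooth noise `gₖ`) is, at each time `t ≥ 0`, a Poisson map for the
structure matrix `B`. -/
theorem flow_of_poisson_system_is_poisson_map
    (d m : ℕ) (hd : 1 ≤ d)
    (B : (Fin d → ℝ) → Fin d → Fin d → ℝ)
    (H : (Fin d → ℝ) → ℝ) (Hhat : Fin m → (Fin d → ℝ) → ℝ)
    (g : Fin m → ℝ → ℝ)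
    (hB : ContDiff ℝ 1 B)
    (hskew : ∀ y i j, B y i j = - B y j i)
    (hJacobi : ∀ y (i j k : Fin d),
      ∑ l, (fderiv ℝ (fun z => B z i j) y (Pi.single l 1) * B y l k
        + fderiv ℝ (fun z => B z j k) y (Pi.single l 1) * B y l i
        + fderiv ℝ (fun z => B z k i) y (Pi.single l 1) * B y l j) = 0)
    (hH : ContDiff ℝ 2 H) (hHhat : ∀ k, ContDiff ℝ 2 (Hhat k))
    (hg : ∀ k, Continuous (g k))
    (φ : ℝ → (Fin d → ℝ) → Fin d → ℝ)
    (hφ : ContDiffOn ℝ 2 (fun p : ℝ × (Fin d → ℝ) => φ p.1 p.2)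
      (Set.Ici (0 : ℝ) ×ˢ Set.univ))
    (hφ0 : ∀ y, φ 0 y = y)
    (hode : ∀ t ∈ Set.Ici (0 : ℝ), ∀ y i,
      HasDerivWithinAt (fun s => φ s y i)
        (∑ j, B (φ t y) i j *
          (fderiv ℝ H (φ t y) (Pi.single j 1)
            + ∑ k, g k t * fderiv ℝ (Hhat k) (φ t y) (Pi.single j 1)))
        (Set.Ici (0 : ℝ)) t) :
    ∀ t ∈ Set.Ici (0 : ℝ), ∀ y (i j : Fin d),
      ∑ k, ∑ l, fderiv ℝ (fun z => φ t z i) y (Pi.single k 1) * B y k l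
        * fderiv ℝ (fun z => φ t z j) y (Pi.single l 1)
      = B (φ t y) i j := by
  intro t ht y
  have ht' : (0:ℝ) ≤ t := ht
  -- reformulate the ODE with auxf
  have hode' : ∀ s ∈ Set.Ici (0:ℝ), ∀ z a, HasDerivWithinAt (fun τ => φ τ z a)
      (auxf B H Hhat g s (φ s z) a) (Set.Ici (0:ℝ)) s := by
    intro s hs z a
    have := hode s hs z a
    simpa [auxf, auxV] using this
  set Mvec : ℝ → Fin d → Fin d → ℝ := fun τ a b => ∑ k, ∑ l,
    fderiv ℝ (fun z => φ τ z a) y (Pi.single k 1) * B y k l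
      * fderiv ℝ (fun z => φ τ z b) y (Pi.single l 1) with hMdef
  set Nvec : ℝ → Fin d → Fin d → ℝ := fun τ a b => B (φ τ y) a b with hNdef
  set v : ℝ → (Fin d → Fin d → ℝ) → Fin d → Fin d → ℝ := fun τ M =>
    if τ ∈ Set.Icc (0:ℝ) t then
      (fun a b => (∑ l, auxA B H Hhat g (φ τ y) τ a l * M l b)
        + ∑ l, M a l * auxA B H Hhat g (φ τ y) τ b l)
    else 0 with hvdef
  -- continuity and bound for A
  have hΦc : ContinuousOn (fun τ => φ τ y) (Set.Icc 0 t) := by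
    have h1 : ContinuousOn (fun p : ℝ × (Fin d → ℝ) => φ p.1 p.2)
        (Set.Ici (0:ℝ) ×ˢ Set.univ) := hφ.continuousOn
    exact h1.comp ((continuous_id.prodMk continuous_const).continuousOn)
      (fun τ hτ => ⟨hτ.1, trivial⟩)
  have hAc : ContinuousOn (fun τ => auxA B H Hhat g (φ τ y) τ) (Set.Icc 0 t) :=
    aux_A_contOn hB hH hHhat hg hΦc
  obtain ⟨C, hC⟩ := isCompact_Icc.exists_bound_of_continuousOn hAc
  have hC0 : 0 ≤ C := le_trans (norm_nonneg _) (hC 0 ⟨le_refl 0, ht'⟩)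
  have hAentry : ∀ τ ∈ Set.Icc (0:ℝ) t, ∀ a b : Fin d,
      |auxA B H Hhat g (φ τ y) τ a b| ≤ C := by
    intro τ hτ a b
    calc |auxA B H Hhat g (φ τ y) τ a b| = ‖auxA B H Hhat g (φ τ y) τ a b‖ := rfl
      _ ≤ ‖auxA B H Hhat g (φ τ y) τ a‖ := norm_le_pi_norm _ b
      _ ≤ ‖auxA B H Hhat g (φ τ y) τ‖ := norm_le_pi_norm _ a
      _ ≤ C := hC τ hτ
  -- Lipschitz field
  have hlip : ∀ τ, LipschitzOnWith (Real.toNNReal (2 * d * C)) (v τ)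
      (Set.univ : Set (Fin d → Fin d → ℝ)) := by
    intro τ
    apply LipschitzWith.lipschitzOnWith
    apply LipschitzWith.of_dist_le_mul
    intro M M'
    by_cases hτ : τ ∈ Set.Icc (0:ℝ) t
    · have hv : ∀ M'' : Fin d → Fin d → ℝ, v τ M'' = (fun a b =>
          (∑ l, auxA B H Hhat g (φ τ y) τ a l * M'' l b)
            + ∑ l, M'' a l * auxA B H Hhat g (φ τ y) τ b l) := by
        intro M''; rw [hvdef]; simp only [if_pos hτ]
      rw [hv M, hv M']
      have hKC : (Real.toNNReal (2 * d * C) : ℝ) = 2 * d * C :=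
        Real.coe_toNNReal _ (by positivity)
      rw [hKC]
      have hnonneg : (0:ℝ) ≤ 2 * d * C * dist M M' := by positivity
      refine dist_pi_le_iff hnonneg |>.2 fun a => ?_
      refine dist_pi_le_iff hnonneg |>.2 fun b => ?_
      rw [Real.dist_eq]
      have hdiff : ((∑ l, auxA B H Hhat g (φ τ y) τ a l * M l b)
            + ∑ l, M a l * auxA B H Hhat g (φ τ y) τ b l)
          - ((∑ l, auxA B H Hhat g (φ τ y) τ a l * M' l b)
            + ∑ l, M' a l * auxA B H Hhat g (φ τ y) τ b l)
          = ∑ l, (auxA B H Hhat g (φ τ y) τ a l * (M l b - M' l b)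
            + (M a l - M' a l) * auxA B H Hhat g (φ τ y) τ b l) := by
        rw [← Finset.sum_add_distrib, ← Finset.sum_add_distrib, ← Finset.sum_sub_distrib]
        exact Finset.sum_congr rfl fun l _ => by ring
      rw [hdiff]
      have hentry : ∀ l : Fin d, |auxA B H Hhat g (φ τ y) τ a l * (M l b - M' l b)
          + (M a l - M' a l) * auxA B H Hhat g (φ τ y) τ b l| ≤ 2 * C * dist M M' := by
        intro l
        have h1 : |M l b - M' l b| ≤ dist M M' := by
          rw [← Real.dist_eq]
          exact le_trans (dist_le_pi_dist (M l) (M' l) b) (dist_le_pi_dist M M' l)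
        have h2 : |M a l - M' a l| ≤ dist M M' := by
          rw [← Real.dist_eq]
          exact le_trans (dist_le_pi_dist (M a) (M' a) l) (dist_le_pi_dist M M' a)
        have ha1 := hAentry τ hτ a l
        have ha2 := hAentry τ hτ b l
        calc |auxA B H Hhat g (φ τ y) τ a l * (M l b - M' l b)
            + (M a l - M' a l) * auxA B H Hhat g (φ τ y) τ b l|
            ≤ |auxA B H Hhat g (φ τ y) τ a l * (M l b - M' l b)|
              + |(M a l - M' a l) * auxA B H Hhat g (φ τ y) τ b l| := abs_add_le _ _
          _ = |auxA B H Hhat g (φ τ y) τ a l| * |M l b - M' l b|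
              + |M a l - M' a l| * |auxA B H Hhat g (φ τ y) τ b l| := by
              rw [abs_mul, abs_mul]
          _ ≤ C * dist M M' + dist M M' * C := by
              apply add_le_add
              · exact mul_le_mul ha1 h1 (abs_nonneg _) hC0
              · exact mul_le_mul h2 ha2 (abs_nonneg _) dist_nonneg
          _ = 2 * C * dist M M' := by ring
      calc |∑ l, (auxA B H Hhat g (φ τ y) τ a l * (M l b - M' l b)
            + (M a l - M' a l) * auxA B H Hhat g (φ τ y) τ b l)|
          ≤ ∑ l, |auxA B H Hhat g (φ τ y) τ a l * (M l b - M' l b)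
            + (M a l - M' a l) * auxA B H Hhat g (φ τ y) τ b l| :=
            Finset.abs_sum_le_sum_abs _ _
        _ ≤ ∑ _l : Fin d, 2 * C * dist M M' := Finset.sum_le_sum fun l _ => hentry l
        _ = d * (2 * C * dist M M') := by
            rw [Finset.sum_const, Finset.card_univ, Fintype.card_fin]; ring
        _ = 2 * d * C * dist M M' := by ring
    · have hv : ∀ M'' : Fin d → Fin d → ℝ, v τ M'' = 0 := by
        intro M''; rw [hvdef]; simp only [if_neg hτ]
      rw [hv M, hv M']
      simp only [dist_self]
      positivity
  -- derivative of Mvec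
  have hMN : ∀ τ, τ ∈ Set.Icc (0:ℝ) t → HasDerivWithinAt Mvec (v τ (Mvec τ))
      (Set.Ici (0:ℝ)) τ := by
    intro τ hτ
    have hτ0 : τ ∈ Set.Ici (0:ℝ) := hτ.1
    have hv : v τ (Mvec τ) = (fun a b =>
        (∑ l, auxA B H Hhat g (φ τ y) τ a l * Mvec τ l b)
          + ∑ l, Mvec τ a l * auxA B H Hhat g (φ τ y) τ b l) := by
      rw [hvdef]; simp only [if_pos hτ]
    rw [hv]
    rw [hasDerivWithinAt_pi]; intro a
    rw [hasDerivWithinAt_pi]; intro b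
    have hprod : HasDerivWithinAt (fun σ => Mvec σ a b)
        (∑ k, ∑ l, ((∑ p, auxA B H Hhat g (φ τ y) τ a p
            * fderiv ℝ (fun z => φ τ z p) y (Pi.single k 1)) * B y k l
            * fderiv ℝ (fun z => φ τ z b) y (Pi.single l 1)
          + fderiv ℝ (fun z => φ τ z a) y (Pi.single k 1) * B y k l
            * (∑ p, auxA B H Hhat g (φ τ y) τ b p
              * fderiv ℝ (fun z => φ τ z p) y (Pi.single l 1))))
        (Set.Ici (0:ℝ)) τ := by
      rw [hMdef]
      apply HasDerivWithinAt.fun_sum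
      intro k _
      apply HasDerivWithinAt.fun_sum
      intro l _
      exact ((aux_variational hB hH hHhat hφ hode' y τ hτ0 a k).mul_const (B y k l)).mul
        (aux_variational hB hH hHhat hφ hode' y τ hτ0 b l)
    have halg : (∑ k, ∑ l, ((∑ p, auxA B H Hhat g (φ τ y) τ a p
            * fderiv ℝ (fun z => φ τ z p) y (Pi.single k 1)) * B y k l
            * fderiv ℝ (fun z => φ τ z b) y (Pi.single l 1)
          + fderiv ℝ (fun z => φ τ z a) y (Pi.single k 1) * B y k l
            * (∑ p, auxA B H Hhat g (φ τ y) τ b p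
              * fderiv ℝ (fun z => φ τ z p) y (Pi.single l 1))))
        = (∑ l, auxA B H Hhat g (φ τ y) τ a l * Mvec τ l b)
          + ∑ l, Mvec τ a l * auxA B H Hhat g (φ τ y) τ b l := by
      rw [hMdef]
      exact aux_M_alg (fun a' l' => auxA B H Hhat g (φ τ y) τ a' l')
        (fun a' b' => fderiv ℝ (fun z => φ τ z a') y (Pi.single b' 1)) (B y) a b
    rw [halg] at hprod
    exact hprod
  -- derivative of Nvec
  have hNN : ∀ τ, τ ∈ Set.Icc (0:ℝ) t → HasDerivWithinAt Nvec (v τ (Nvec τ))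
      (Set.Ici (0:ℝ)) τ := by
    intro τ hτ
    have hτ0 : τ ∈ Set.Ici (0:ℝ) := hτ.1
    have hv : v τ (Nvec τ) = (fun a b =>
        (∑ l, auxA B H Hhat g (φ τ y) τ a l * Nvec τ l b)
          + ∑ l, Nvec τ a l * auxA B H Hhat g (φ τ y) τ b l) := by
      rw [hvdef]; simp only [if_pos hτ]
    rw [hv]
    rw [hasDerivWithinAt_pi]; intro a
    rw [hasDerivWithinAt_pi]; intro b
    have hder := aux_Nder hB hode' y τ hτ0 a b
    have halg : (∑ l, auxf B H Hhat g τ (φ τ y) l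
          * fderiv ℝ (fun z => B z a b) (φ τ y) (Pi.single l 1))
        = (∑ l, auxA B H Hhat g (φ τ y) τ a l * Nvec τ l b)
          + ∑ l, Nvec τ a l * auxA B H Hhat g (φ τ y) τ b l := by
      rw [hNdef]
      exact aux_N_alg hB hskew hJacobi hH hHhat τ (φ τ y) a b
    rw [halg] at hder
    rw [hNdef]
    exact hder
  -- initial condition
  have hinit : Mvec 0 = Nvec 0 := by
    have hJ0 : ∀ (a b : Fin d),
        fderiv ℝ (fun z => φ 0 z a) y (Pi.single b 1) = (Pi.single b 1 : Fin d → ℝ) a := by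
      intro a b
      have hid : (fun z : Fin d → ℝ => φ 0 z a) = fun z => z a :=
        funext fun z => by rw [hφ0 z]
      rw [hid]
      rw [show (fun z : Fin d → ℝ => z a)
        = ⇑(ContinuousLinearMap.proj (R := ℝ) (φ := fun _ : Fin d => ℝ) a) from rfl,
        ContinuousLinearMap.fderiv]
      rfl
    funext a b
    show (∑ k, ∑ l, fderiv ℝ (fun z => φ 0 z a) y (Pi.single k 1) * B y k l
      * fderiv ℝ (fun z => φ 0 z b) y (Pi.single l 1)) = B (φ 0 y) a b
    simp only [hJ0]
    simp only [hφ0]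
    simp [Pi.single_apply]
  -- apply uniqueness
  have hMcont : ContinuousOn Mvec (Set.Icc 0 t) := fun τ hτ =>
    ((hMN τ hτ).continuousWithinAt).mono Set.Icc_subset_Ici_self
  have hNcont : ContinuousOn Nvec (Set.Icc 0 t) := fun τ hτ =>
    ((hNN τ hτ).continuousWithinAt).mono Set.Icc_subset_Ici_self
  have hMder' : ∀ τ ∈ Set.Ico (0:ℝ) t, HasDerivWithinAt Mvec (v τ (Mvec τ)) (Set.Ici τ) τ :=
    fun τ hτ => (hMN τ ⟨hτ.1, le_of_lt hτ.2⟩).mono (Set.Ici_subset_Ici.2 hτ.1)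
  have hNder' : ∀ τ ∈ Set.Ico (0:ℝ) t, HasDerivWithinAt Nvec (v τ (Nvec τ)) (Set.Ici τ) τ :=
    fun τ hτ => (hNN τ ⟨hτ.1, le_of_lt hτ.2⟩).mono (Set.Ici_subset_Ici.2 hτ.1)
  have key := ODE_solution_unique_of_mem_Icc_right (fun τ _ => hlip τ) hMcont hMder'
    (fun τ _ => Set.mem_univ _) hNcont hNder' (fun τ _ => Set.mem_univ _) hinit
  have hfinal : Mvec t = Nvec t := key ⟨ht', le_refl t⟩
  intro i j
  have := congrFun (congrFun hfinal i) j
  rw [hMdef, hNdef] at this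
  exact this
end

section
/- Let d ≥ 1. Let B ∈ ℝ^{d×d} be skew-symmetric, and let T_1, …, T_d ∈ ℝ^{d×d} be matrices such that each T_l is skew-symmetric and the following Jacobi relations hold: for all i, j, k ∈ {1,…,d}, Σ_{l=1}^d ((T_l)_{ij} B_{lk} + (T_l)_{jk} B_{li} + (T_l)_{ki} B_{lj}) = 0. Let v ∈ ℝ^d, let S ∈ ℝ^{d×d} be symmetric, define the matrix M ∈ ℝ^{d×d} by M_{il} = Σ_{n=1}^d (T_l)_{in} v_n for all i, l, and set 𝒮 = M + B·S. Then for all i, j ∈ {1,…,d}: (𝒮 B + B 𝒮^T)_{ij} = Σ_{l=1}^d Σ_{n=1}^d (T_l)_{ij} B_{ln} v_n. (This is the pointwise algebraic identity behind the evolution equation d B(φ_t) = 𝒮 B(φ_t) + B(φ_t)𝒮^T used in the proof that the flow of a stochastic Poisson system is a Poisson map: there T_l = ∂_l B(y), v = ∇Ĥ_k(y), S = ∇²Ĥ_k(y).) -/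
/-- The pointwise algebraic identity behind the evolution equation
`d B(φ_t) = SS B(φ_t) + B(φ_t) SS.transpose` in the proof that the flow of a stochastic Poisson
system is a Poisson map: with `T_l = ∂_l B(y)`, `v = ∇Ĥ(y)`, `S = ∇²Ĥ(y)`,
`M_{il} = Σₙ (T_l)_{in} vₙ` and `SS = M + B·S`, one has
`(SS B + B SS.transpose)_{ij} = Σ_l Σ_n (T_l)_{ij} B_{ln} v_n`. -/
theorem poisson_evolution_algebraic_identity
    (d : ℕ) (hd : 1 ≤ d)
    (B : Matrix (Fin d) (Fin d) ℝ) (T : Fin d → Matrix (Fin d) (Fin d) ℝ)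
    (v : Fin d → ℝ) (S : Matrix (Fin d) (Fin d) ℝ)
    (hBskew : ∀ i j, B i j = - B j i)
    (hTskew : ∀ l i j, T l i j = - T l j i)
    (hSsymm : ∀ i j, S i j = S j i)
    (hJacobi : ∀ i j k : Fin d,
      ∑ l, (T l i j * B l k + T l j k * B l i + T l k i * B l j) = 0)
    (M : Matrix (Fin d) (Fin d) ℝ)
    (hM : ∀ i l, M i l = ∑ n, T l i n * v n)
    (SS : Matrix (Fin d) (Fin d) ℝ) (hSS : SS = M + B * S) :
    ∀ i j : Fin d, (SS * B + B * SS.transpose) i j = ∑ l, ∑ n, T l i j * B l n * v n := by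
  intro i j
  subst hSS
  -- Jacobi rearranged: for each n, ∑ l T l i n * B l j = ∑ l (T l j n * B l i + T l i j * B l n)
  have hJ : ∀ n : Fin d,
      ∑ l, T l i n * B l j = ∑ l, (T l j n * B l i + T l i j * B l n) := by
    intro n
    have h := hJacobi i n j
    have h2 : ∀ l : Fin d,
        T l i n * B l j + T l n j * B l i + T l j i * B l n
          = T l i n * B l j - (T l j n * B l i + T l i j * B l n) := by
      intro l
      rw [hTskew l n j, hTskew l j i]
      ring
    rw [Finset.sum_congr rfl (fun l _ => h2 l), Finset.sum_sub_distrib] at h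
    linarith [h]
  -- expand matrix entries
  simp only [Matrix.add_apply, Matrix.mul_apply, Matrix.transpose_apply, hM]
  -- cancel the B*S parts
  have hBS : (∑ k, (∑ m, B i m * S m k) * B k j)
      + (∑ k, B i k * (∑ m, B j m * S m k)) = 0 := by
    have e1 : (∑ k, (∑ m, B i m * S m k) * B k j)
        = ∑ k, ∑ m, -(B i m * S k m * B j k) := by
      apply Finset.sum_congr rfl; intro k _
      rw [Finset.sum_mul]
      apply Finset.sum_congr rfl; intro m _
      rw [hBskew k j, hSsymm m k]; ring
    have e2 : (∑ k, B i k * (∑ m, B j m * S m k))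
        = ∑ k, ∑ m, B i k * B j m * S m k := by
      apply Finset.sum_congr rfl; intro k _
      rw [Finset.mul_sum]
      apply Finset.sum_congr rfl; intro m _
      ring
    rw [e1, e2, Finset.sum_comm (f := fun k m => B i k * B j m * S m k)]
    rw [← Finset.sum_add_distrib]
    apply Finset.sum_eq_zero; intro k _
    rw [← Finset.sum_add_distrib]
    apply Finset.sum_eq_zero; intro m _
    ring
  -- now combine
  have key : (∑ k, (∑ n, T k i n * v n) * B k j) + (∑ k, B i k * (∑ n, T k j n * v n))
      = ∑ l, ∑ n, T l i j * B l n * v n := by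
    have e1 : (∑ k, (∑ n, T k i n * v n) * B k j)
        = ∑ n, (∑ k, T k i n * B k j) * v n := by
      calc ∑ k, (∑ n, T k i n * v n) * B k j
          = ∑ k, ∑ n, T k i n * B k j * v n := by
            apply Finset.sum_congr rfl; intro k _
            rw [Finset.sum_mul]
            apply Finset.sum_congr rfl; intro n _; ring
        _ = ∑ n, ∑ k, T k i n * B k j * v n := Finset.sum_comm
        _ = ∑ n, (∑ k, T k i n * B k j) * v n := by
            apply Finset.sum_congr rfl; intro n _
            rw [Finset.sum_mul]
    have e2 : (∑ k, B i k * (∑ n, T k j n * v n))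
        = ∑ n, (-(∑ k, T k j n * B k i)) * v n := by
      calc ∑ k, B i k * (∑ n, T k j n * v n)
          = ∑ k, ∑ n, -(T k j n * B k i * v n) := by
            apply Finset.sum_congr rfl; intro k _
            rw [Finset.mul_sum]
            apply Finset.sum_congr rfl; intro n _
            rw [hBskew i k]; ring
        _ = ∑ n, ∑ k, -(T k j n * B k i * v n) := Finset.sum_comm
        _ = ∑ n, (-(∑ k, T k j n * B k i)) * v n := by
            apply Finset.sum_congr rfl; intro n _
            rw [neg_mul, Finset.sum_mul, ← Finset.sum_neg_distrib]
    rw [e1, e2, ← Finset.sum_add_distrib,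
      Finset.sum_comm (f := fun l n => T l i j * B l n * v n)]
    apply Finset.sum_congr rfl; intro n _
    have := hJ n
    rw [Finset.sum_add_distrib] at this
    calc (∑ k, T k i n * B k j) * v n + (-(∑ k, T k j n * B k i)) * v n
        = ((∑ k, T k i n * B k j) - (∑ k, T k j n * B k i)) * v n := by ring
      _ = (∑ l, T l i j * B l n) * v n := by rw [this]; ring
      _ = ∑ l, T l i j * B l n * v n := by rw [Finset.sum_mul]
  -- assemble
  simp only [add_mul, mul_add, Finset.sum_add_distrib]
  linarith [hBS, key]
end

section
/- Let d ≥ 1, let B : ℝ^d → ℝ^{d×d} be continuously differentiable, let H : ℝ^d → ℝ be of class C², and suppose there exists a continuously differentiable function C : ℝ^d → ℝ with ∇C(y)^T B(y) = 0 for all y (a Casimir of B) such that for every c ∈ ℝ the level set {y ∈ ℝ^d : C(y) = c} is compact. Then for every initial value y_0 ∈ ℝ^d there exists a globally defined differentiable function y : [0,∞) → ℝ^d with y(0) = y_0 and y'(t) = B(y(t))∇H(y(t)) for all t ≥ 0, and this solution satisfies C(y(t)) = C(y_0) and ‖y(t)‖ ≤ R(y_0) := max{‖z‖ : z ∈ ℝ^d,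 C(z) = C(y_0)} for all t ≥ 0, where ‖·‖ is the Euclidean norm. -/
open Set Metric
open scoped NNReal

section CasimirAux

variable {d : ℕ}

/-- Expand a continuous linear functional on Euclidean space in coordinates. -/
lemma casimir_fderiv_expand (L : EuclideanSpace ℝ (Fin d) →L[ℝ] ℝ)
    (v : EuclideanSpace ℝ (Fin d)) :
    L v = ∑ i, v i * L (EuclideanSpace.single i 1) := by
  have hv : (∑ i, v i • EuclideanSpace.single i (1:ℝ)) = v := by
    have := (EuclideanSpace.basisFun (Fin d) ℝ).sum_repr v
    simpa [EuclideanSpace.basisFun_repr, EuclideanSpace.basisFun_apply] using this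
  conv_lhs => rw [← hv]
  simp [smul_eq_mul]

/-- The vector field of the Poisson system, as a map into Euclidean space. -/
noncomputable def casimirField (B : EuclideanSpace ℝ (Fin d) → Fin d → Fin d → ℝ)
    (H : EuclideanSpace ℝ (Fin d) → ℝ) (y : EuclideanSpace ℝ (Fin d)) :
    EuclideanSpace ℝ (Fin d) :=
  (EuclideanSpace.equiv (Fin d) ℝ).symm
    (fun i => ∑ j, B y i j * fderiv ℝ H y (EuclideanSpace.single j 1))

lemma casimirField_apply (B : EuclideanSpace ℝ (Fin d) → Fin d → Fin d → ℝ)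
    (H : EuclideanSpace ℝ (Fin d) → ℝ) (y : EuclideanSpace ℝ (Fin d)) (i : Fin d) :
    casimirField B H y i = ∑ j, B y i j * fderiv ℝ H y (EuclideanSpace.single j 1) := rfl

lemma casimirField_contDiff (B : EuclideanSpace ℝ (Fin d) → Fin d → Fin d → ℝ)
    (hB : ContDiff ℝ 1 B) (H : EuclideanSpace ℝ (Fin d) → ℝ) (hH : ContDiff ℝ 2 H) :
    ContDiff ℝ 1 (casimirField B H) := by
  have hdH : ContDiff ℝ 1 (fderiv ℝ H) := hH.fderiv_right (by norm_num)
  refine ((EuclideanSpace.equiv (Fin d) ℝ).symm : (Fin d → ℝ) ≃L[ℝ] _).contDiff.comp ?_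
  refine contDiff_pi.mpr fun i => ?_
  refine ContDiff.sum fun j _ => ContDiff.mul ?_ (hdH.clm_apply contDiff_const)
  exact contDiff_pi.mp (contDiff_pi.mp hB i) j

end CasimirAux

set_option maxHeartbeats 1600000 in
/-- Global well-posedness criterion: if the Poisson system `ẏ = B(y)∇H(y)` admits a
Casimir function `C` with compact level sets, then for every initial value `y₀` there is
a global solution on `[0,∞)` which preserves `C` and stays bounded by
`R(y₀) = max {‖z‖ : C(z) = C(y₀)}` (Euclidean norm). -/
theorem global_wellposedness_from_casimir_with_compact_level_sets
    (d : ℕ) (hd : 1 ≤ d)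
    (B : EuclideanSpace ℝ (Fin d) → Fin d → Fin d → ℝ)
    (hB : ContDiff ℝ 1 B)
    (H : EuclideanSpace ℝ (Fin d) → ℝ) (hH : ContDiff ℝ 2 H)
    (C : EuclideanSpace ℝ (Fin d) → ℝ) (hC : ContDiff ℝ 1 C)
    (hCas : ∀ y (j : Fin d),
      ∑ i, fderiv ℝ C y (EuclideanSpace.single i 1) * B y i j = 0)
    (hcomp : ∀ c : ℝ, IsCompact {y : EuclideanSpace ℝ (Fin d) | C y = c})
    (y₀ : EuclideanSpace ℝ (Fin d)) :
    ∃ R : ℝ,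
      IsGreatest ((fun z : EuclideanSpace ℝ (Fin d) => ‖z‖) '' {z | C z = C y₀}) R ∧
      ∃ y : ℝ → EuclideanSpace ℝ (Fin d), y 0 = y₀ ∧
        (∀ t ∈ Set.Ici (0 : ℝ), ∀ i,
          HasDerivWithinAt (fun s => y s i)
            (∑ j, B (y t) i j * fderiv ℝ H (y t) (EuclideanSpace.single j 1))
            (Set.Ici (0 : ℝ)) t) ∧
        (∀ t ∈ Set.Ici (0 : ℝ), C (y t) = C y₀) ∧
        (∀ t ∈ Set.Ici (0 : ℝ), ‖y t‖ ≤ R) := by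
  classical
  set f : EuclideanSpace ℝ (Fin d) → EuclideanSpace ℝ (Fin d) := casimirField B H with hfdef
  have hf : ContDiff ℝ 1 f := casimirField_contDiff B hB H hH
  -- the radius R
  obtain ⟨R, hRg⟩ : ∃ R, IsGreatest ((fun z : EuclideanSpace ℝ (Fin d) => ‖z‖) '' {z | C z = C y₀}) R :=
    ((hcomp (C y₀)).image continuous_norm).exists_isGreatest ⟨‖y₀‖, y₀, rfl, rfl⟩
  have hRmem : ∀ z : EuclideanSpace ℝ (Fin d), C z = C y₀ → ‖z‖ ≤ R := fun z hz => hRg.2 ⟨z, hz, rfl⟩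
  have hR0 : 0 ≤ R := (norm_nonneg y₀).trans (hRmem y₀ rfl)
  -- the Casimir kills the vector field
  have hCdiff : Differentiable ℝ C := hC.differentiable one_ne_zero
  have hzero : ∀ x : EuclideanSpace ℝ (Fin d), fderiv ℝ C x (f x) = 0 := by
    intro x
    rw [casimir_fderiv_expand]
    have h1 : ∀ i, f x i = ∑ j, B x i j * fderiv ℝ H x (EuclideanSpace.single j 1) :=
      fun i => rfl
    calc ∑ i, f x i * fderiv ℝ C x (EuclideanSpace.single i 1)
        = ∑ j, (∑ i, fderiv ℝ C x (EuclideanSpace.single i 1) * B x i j) *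
            fderiv ℝ H x (EuclideanSpace.single j 1) := by
          simp_rw [h1, Finset.sum_mul]
          rw [Finset.sum_comm]
          exact Finset.sum_congr rfl fun j _ => Finset.sum_congr rfl fun i _ => by ring
      _ = 0 := by simp [hCas x]
  -- bounds on the compact ball of radius R+1
  obtain ⟨M₀, hM₀⟩ := (isCompact_closedBall (0:EuclideanSpace ℝ (Fin d)) (R+1)).exists_bound_of_continuousOn
    hf.continuous.continuousOn
  obtain ⟨L₀, hL₀⟩ := (isCompact_closedBall (0:EuclideanSpace ℝ (Fin d)) (R+1)).exists_bound_of_continuousOn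
    (hf.continuous_fderiv one_ne_zero).continuousOn
  set M : ℝ := max M₀ 0 with hMdef
  have hM : ∀ x ∈ closedBall (0:EuclideanSpace ℝ (Fin d)) (R+1), ‖f x‖ ≤ M :=
    fun x hx => (hM₀ x hx).trans (le_max_left _ _)
  set L : ℝ≥0 := ⟨max L₀ 0, le_max_right _ _⟩ with hLdef
  have hLip : LipschitzOnWith L f (closedBall (0:EuclideanSpace ℝ (Fin d)) (R+1)) := by
    refine Convex.lipschitzOnWith_of_nnnorm_fderiv_le (fun x _ => (hf.differentiable one_ne_zero) x)
      (fun x hx => ?_) (convex_closedBall _ _)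
    rw [← NNReal.coe_le_coe, coe_nnnorm]
    exact (hL₀ x hx).trans (le_max_left _ _)
  set τ : ℝ := 1 / (M + 1) with hτdef
  have hMpos : (0:ℝ) < M + 1 := by positivity
  have hτ : 0 < τ := by positivity
  -- one Picard–Lindelöf step of uniform length τ
  have hstep : ∀ (x : EuclideanSpace ℝ (Fin d)) (t₀ : ℝ), ∃ α : ℝ → EuclideanSpace ℝ (Fin d), α t₀ = x ∧ (C x = C y₀ →
      ∀ t ∈ Icc t₀ (t₀+τ), HasDerivWithinAt α (f (α t)) (Icc t₀ (t₀+τ)) t) := by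
    intro x t₀
    by_cases hx : C x = C y₀
    · have hxR : ‖x‖ ≤ R := hRmem x hx
      have hball : closedBall x 1 ⊆ closedBall (0:EuclideanSpace ℝ (Fin d)) (R+1) := by
        refine closedBall_subset_closedBall' ?_
        rw [dist_zero_right]
        linarith
      have hpl : IsPicardLindelof (fun _ : ℝ => f) (tmin := t₀) (tmax := t₀+τ)
          ⟨t₀, le_rfl, by linarith⟩ x 1 0 (⟨M, le_max_right _ _⟩ : ℝ≥0) L :=
        { lipschitzOnWith := fun t _ => hLip.mono (by simpa using hball)
          continuousOn := fun z _ => continuousOn_const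
          norm_le := fun t _ z hz => hM z (hball (by simpa using hz))
          mul_max_le := by
            show M * max (t₀ + τ - t₀) (t₀ - t₀) ≤ (1:ℝ) - 0
            have : max (t₀ + τ - t₀) (t₀ - t₀) = τ := by
              rw [add_sub_cancel_left, sub_self, max_eq_left hτ.le]
            rw [this, hτdef, sub_zero]
            rw [mul_one_div, div_le_one hMpos]
            linarith }
      obtain ⟨α, hα0, hαD⟩ := hpl.exists_eq_forall_mem_Icc_hasDerivWithinAt₀
      exact ⟨α, hα0, fun _ t ht => hαD t ht⟩
    · exact ⟨fun _ => x, rfl, fun h => absurd h hx⟩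
  choose sol hsol0 hsolD using hstep
  -- the Casimir is constant along each step
  have hconst : ∀ (x : EuclideanSpace ℝ (Fin d)) (t₀ : ℝ), C x = C y₀ →
      ∀ t ∈ Icc t₀ (t₀+τ), C (sol x t₀ t) = C y₀ := by
    intro x t₀ hx t ht
    have hD := hsolD x t₀ hx
    have hcont : ContinuousOn (fun s => C (sol x t₀ s)) (Icc t₀ (t₀+τ)) := by
      refine hC.continuous.comp_continuousOn (fun s hs => (hD s hs).continuousWithinAt)
    have hder : ∀ s ∈ Ico t₀ (t₀+τ),
        HasDerivWithinAt (fun s => C (sol x t₀ s)) 0 (Ici s) s := by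
      intro s hs
      have h1 : HasDerivWithinAt (fun s => C (sol x t₀ s))
          (fderiv ℝ C (sol x t₀ s) (f (sol x t₀ s))) (Icc t₀ (t₀+τ)) s :=
        (hCdiff (sol x t₀ s)).hasFDerivAt.comp_hasDerivWithinAt s (hD s ⟨hs.1, hs.2.le⟩)
      rw [hzero] at h1
      exact h1.mono_of_mem_nhdsWithin (Icc_mem_nhdsGE_of_mem ⟨hs.1, hs.2⟩)
    have := constant_of_has_deriv_right_zero hcont hder t ht
    rw [this, hsol0 x t₀, hx]
  -- the sequence of nodes
  set X : ℕ → EuclideanSpace ℝ (Fin d) := fun n => Nat.rec y₀ (fun n xp => sol xp (n*τ) (n*τ+τ)) n with hXdef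
  have hX0 : X 0 = y₀ := rfl
  have hXs : ∀ n : ℕ, X (n+1) = sol (X n) (n*τ) (n*τ+τ) := fun n => rfl
  have hK : ∀ n, C (X n) = C y₀ := by
    intro n
    induction n with
    | zero => rfl
    | succ n ih =>
      rw [hXs n]
      exact hconst (X n) (n*τ) ih (n*τ+τ) ⟨by linarith, le_rfl⟩
  -- the glued solution
  set y : ℝ → EuclideanSpace ℝ (Fin d) := fun t => sol (X ⌊t/τ⌋₊) (⌊t/τ⌋₊ * τ) t with hydef
  have hagree : ∀ n : ℕ, ∀ s ∈ Icc ((n:ℝ)*τ) ((n:ℝ)*τ+τ), y s = sol (X n) (n*τ) s := by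
    intro n s hs
    have hs0 : (0:ℝ) ≤ s/τ :=
      div_nonneg (le_trans (by positivity) hs.1) hτ.le
    rcases lt_or_eq_of_le hs.2 with hlt | heq
    · have hfloor : ⌊s/τ⌋₊ = n := by
        rw [Nat.floor_eq_iff hs0]
        constructor
        · rw [le_div_iff₀ hτ]; exact hs.1
        · rw [div_lt_iff₀ hτ]; push_cast; linarith
      simp only [hydef, hfloor]
    · have hfloor : ⌊s/τ⌋₊ = n + 1 := by
        rw [Nat.floor_eq_iff hs0]
        constructor
        · rw [le_div_iff₀ hτ]; push_cast; linarith
        · rw [div_lt_iff₀ hτ]; push_cast; nlinarith [hτ, sq_nonneg τ]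
      have hs2 : s = ((n+1 : ℕ):ℝ)*τ := by push_cast; rw [heq]; ring
      simp only [hydef, hfloor]
      rw [hs2, hsol0, hXs n]
      congr 1
      push_cast; ring
  -- derivative on each segment
  have hseg : ∀ n : ℕ, ∀ t ∈ Icc ((n:ℝ)*τ) ((n:ℝ)*τ+τ),
      HasDerivWithinAt y (f (y t)) (Icc ((n:ℝ)*τ) ((n:ℝ)*τ+τ)) t := by
    intro n t ht
    have h := hsolD (X n) (n*τ) (hK n) t ht
    have hyt : y t = sol (X n) (n*τ) t := hagree n t ht
    rw [hyt]
    exact h.congr (fun s hs => hagree n s hs) hyt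
  -- master derivative claim
  have hmaster : ∀ t ∈ Ici (0:ℝ), HasDerivWithinAt y (f (y t)) (Ici (0:ℝ)) t := by
    intro t ht
    set n := ⌊t/τ⌋₊ with hn
    clear_value n
    have h1 : (n:ℝ)*τ ≤ t := by
      rw [hn, ← le_div_iff₀ hτ]; exact Nat.floor_le (div_nonneg ht hτ.le)
    have h2 : t < (n:ℝ)*τ + τ := by
      have := Nat.lt_floor_add_one (t/τ)
      rw [div_lt_iff₀ hτ] at this
      rw [hn]; linarith
    rcases eq_or_lt_of_le h1 with heq | hlt
    · -- t is a node
      rcases Nat.eq_zero_or_eq_succ_pred n with h0 | hsucc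
      · -- t = 0
        have ht0 : t = 0 := by rw [← heq, h0]; simp
        have : Icc ((n:ℝ)*τ) ((n:ℝ)*τ+τ) ∈ nhdsWithin t (Ici (0:ℝ)) := by
          rw [ht0, h0]
          simpa using Icc_mem_nhdsGE_of_mem (by simpa using hτ : (0:ℝ) ∈ Ico 0 (0+τ))
        exact (hseg n t ⟨h1, h2.le⟩).mono_of_mem_nhdsWithin this
      · obtain ⟨m, rfl⟩ : ∃ m, n = m + 1 := ⟨n - 1, hsucc⟩
        have htm : t = ((m:ℝ)+1)*τ := by rw [← heq]; push_cast; ring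
        have hleft : t ∈ Icc ((m:ℝ)*τ) ((m:ℝ)*τ+τ) := by
          rw [htm]
          constructor
          · linarith [hτ.le]
          · linarith [hτ.le]
        have hL := hseg m t hleft
        have hR := hseg (m+1) t ⟨h1, h2.le⟩
        have hU := hL.union hR
        refine hU.mono_of_mem_nhdsWithin ?_
        have hmem : Ioo ((m:ℝ)*τ) (((m:ℝ)+1)*τ+τ) ∈ nhds t := by
          refine Ioo_mem_nhds ?_ ?_
          · rw [htm]; linarith [hτ]
          · push_cast at h2; linarith
        refine mem_nhdsWithin_of_mem_nhds (Filter.mem_of_superset hmem ?_)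
        intro s hs
        rcases le_or_gt s t with hst | hst
        · left
          refine ⟨hs.1.le, ?_⟩
          rw [htm] at hst; linarith
        · right
          refine ⟨?_, ?_⟩
          · rw [htm] at hst; push_cast; linarith
          · push_cast; push_cast at hs; linarith [hs.2]
    · exact (hseg n t ⟨h1, h2.le⟩).mono_of_mem_nhdsWithin
        (mem_nhdsWithin_of_mem_nhds (Icc_mem_nhds hlt h2))
  -- Casimir preservation
  have hCpres : ∀ t ∈ Ici (0:ℝ), C (y t) = C y₀ := by
    intro t ht
    set n := ⌊t/τ⌋₊ with hn
    clear_value n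
    have h1 : (n:ℝ)*τ ≤ t := by
      rw [hn, ← le_div_iff₀ hτ]; exact Nat.floor_le (div_nonneg ht hτ.le)
    have h2 : t < (n:ℝ)*τ + τ := by
      have := Nat.lt_floor_add_one (t/τ)
      rw [div_lt_iff₀ hτ] at this
      rw [hn]; linarith
    rw [hagree n t ⟨h1, h2.le⟩]
    exact hconst (X n) ((n:ℝ)*τ) (hK n) t ⟨h1, h2.le⟩
  refine ⟨R, hRg, y, ?_, ?_, hCpres, fun t ht => hRmem (y t) (hCpres t ht)⟩
  · -- initial condition
    have h0 : ⌊(0:ℝ)/τ⌋₊ = 0 := by rw [zero_div]; exact Nat.floor_zero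
    simp only [hydef, h0, Nat.cast_zero, zero_mul]
    exact hsol0 y₀ 0
  · -- componentwise derivative
    intro t ht i
    have h := hmaster t ht
    have hcomp := (EuclideanSpace.proj (𝕜 := ℝ) i).hasFDerivAt.comp_hasDerivWithinAt t h
    exact hcomp
end

section
/- For every t ∈ ℝ, define the maps S_t, R_t : ℝ³ → ℝ³ by S_t(y) = (y₁ + t·y₂, y₂, y₃) and R_t(y) = (y₁, y₂·cos(t·y₁) + y₃·sin(t·y₁), -y₂·sin(t·y₁) + y₃·cos(t·y₁)). Then both S_t and R_t are differentiable and are Poisson maps for the Maxwell–Bloch structure matrix B: for every y ∈ ℝ³, DS_t(y) B(y) DS_t(y)^T = B(S_t(y)) and DR_t(y) B(y) DR_t(y)^T = B(R_t(y)), where D denotes the Jacobian matrix. (S_t and R_t are the flow maps of the Maxwell–Bloch splitting subsystems, so this shows each step of the splitting integrator is a Poisson map.) -/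
set_option maxHeartbeats 1000000

/-- The flow maps `S_t(y) = (y₁ + t y₂, y₂, y₃)` and
`R_t(y) = (y₁, y₂ cos(t y₁) + y₃ sin(t y₁), -y₂ sin(t y₁) + y₃ cos(t y₁))` of the
Maxwell–Bloch splitting subsystems are differentiable Poisson maps for the Maxwell–Bloch
structure matrix `B(y) = [[0,-y₃,y₂],[y₃,0,0],[-y₂,0,0]]`. -/
theorem maxwell_bloch_splitting_flows_are_poisson_maps
    (B : (Fin 3 → ℝ) → Matrix (Fin 3) (Fin 3) ℝ)
    (hB : ∀ y : Fin 3 → ℝ, B y = !![0, -y 2, y 1; y 2, 0, 0; -y 1, 0, 0])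
    (S R : ℝ → (Fin 3 → ℝ) → Fin 3 → ℝ)
    (hS : ∀ t y, S t y = ![y 0 + t * y 1, y 1, y 2])
    (hR : ∀ t y, R t y = ![y 0,
      y 1 * Real.cos (t * y 0) + y 2 * Real.sin (t * y 0),
      -(y 1) * Real.sin (t * y 0) + y 2 * Real.cos (t * y 0)]) :
    ∀ t : ℝ,
      (Differentiable ℝ (S t) ∧
        ∀ y (i j : Fin 3), ∑ k, ∑ l,
          fderiv ℝ (fun z => S t z i) y (Pi.single k 1) * B y k l *
            fderiv ℝ (fun z => S t z j) y (Pi.single l 1) = B (S t y) i j) ∧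
      (Differentiable ℝ (R t) ∧
        ∀ y (i j : Fin 3), ∑ k, ∑ l,
          fderiv ℝ (fun z => R t z i) y (Pi.single k 1) * B y k l *
            fderiv ℝ (fun z => R t z j) y (Pi.single l 1) = B (R t y) i j) := by
  intro t
  set pr : Fin 3 → ((Fin 3 → ℝ) →L[ℝ] ℝ) := fun j => ContinuousLinearMap.proj j with hprdef
  have hpr : ∀ (j : Fin 3) (y : Fin 3 → ℝ),
      HasFDerivAt (fun z : Fin 3 → ℝ => z j) (pr j) y := fun j y => hasFDerivAt_apply j y
  refine ⟨⟨?_, ?_⟩, ?_, ?_⟩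
  · -- differentiability of S t
    have hSt : S t = fun y => ![y 0 + t * y 1, y 1, y 2] := funext (hS t)
    rw [hSt]
    rw [differentiable_pi]
    intro i
    fin_cases i <;> simp <;> fun_prop
  · -- Poisson property of S t
    intro y i j
    set DS : Fin 3 → ((Fin 3 → ℝ) →L[ℝ] ℝ) := ![pr 0 + t • pr 1, pr 1, pr 2] with hDS
    have hd : ∀ i : Fin 3, HasFDerivAt (fun z => S t z i) (DS i) y := by
      intro i
      have h : (fun z => S t z i) = fun z => ![z 0 + t * z 1, z 1, z 2] i := by
        funext z; rw [hS]
      rw [h]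
      fin_cases i
      · simpa [hDS, Pi.add_def] using (hpr 0 y).add ((hpr 1 y).const_mul t)
      · simpa [hDS] using hpr 1 y
      · simpa [hDS] using hpr 2 y
    simp only [(hd i).fderiv, (hd j).fderiv]
    fin_cases i <;> fin_cases j <;>
      simp [Fin.sum_univ_three, hDS, hprdef, hB, hS, Pi.single_apply,
        ContinuousLinearMap.add_apply, ContinuousLinearMap.smul_apply,
        ContinuousLinearMap.proj_apply, Matrix.vecHead, Matrix.vecTail] <;> ring
  · -- differentiability of R t
    have hRt : R t = fun y => ![y 0,
        y 1 * Real.cos (t * y 0) + y 2 * Real.sin (t * y 0),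
        -(y 1) * Real.sin (t * y 0) + y 2 * Real.cos (t * y 0)] := funext (hR t)
    rw [hRt]
    rw [differentiable_pi]
    intro i
    fin_cases i <;> simp <;> fun_prop
  · -- Poisson property of R t
    intro y i j
    set u := t * y 0 with hu
    set DR : Fin 3 → ((Fin 3 → ℝ) →L[ℝ] ℝ) :=
      ![pr 0,
        (-(y 1 • Real.sin u • t • pr 0) + Real.cos u • pr 1)
          + (y 2 • Real.cos u • t • pr 0 + Real.sin u • pr 2),
        (-(y 1 • Real.cos u • t • pr 0) + -(Real.sin u • pr 1))
          + (-(y 2 • Real.sin u • t • pr 0) + Real.cos u • pr 2)] with hDR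
    have hd : ∀ i : Fin 3, HasFDerivAt (fun z => R t z i) (DR i) y := by
      intro i
      have h : (fun z => R t z i) = fun z => ![z 0,
          z 1 * Real.cos (t * z 0) + z 2 * Real.sin (t * z 0),
          -(z 1) * Real.sin (t * z 0) + z 2 * Real.cos (t * z 0)] i := by
        funext z; rw [hR]
      rw [h]
      fin_cases i
      · simpa [hDR] using hpr 0 y
      · refine (((hpr 1 y).mul (((hpr 0 y).const_mul t).cos)).add
            ((hpr 2 y).mul (((hpr 0 y).const_mul t).sin))).congr_fderiv ?_
        ext v <;> simp [hDR, hu] <;> ring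
      · refine ((((hpr 1 y).neg).mul (((hpr 0 y).const_mul t).sin)).add
            ((hpr 2 y).mul (((hpr 0 y).const_mul t).cos))).congr_fderiv ?_
        ext v <;> simp [hDR, hu] <;> ring
    simp only [(hd i).fderiv, (hd j).fderiv]
    fin_cases i <;> fin_cases j <;>
      simp [Fin.sum_univ_three, hDR, hprdef, hB, hR, hu, Pi.single_apply,
        ContinuousLinearMap.add_apply, ContinuousLinearMap.smul_apply,
        ContinuousLinearMap.neg_apply, ContinuousLinearMap.proj_apply, Matrix.vecHead, Matrix.vecTail] <;> ring
end

section
/- Fix h > 0, σ₁ ≥ 0 and an arbitrary sequence of real numbers (Δ_n)_{n≥1}. Define S_t(y) = (y₁ + t·y₂, y₂, y₃) and R_t(y) = (y₁, y₂·cos(t·y₁) + y₃·sin(t·y₁), -y₂·sin(t·y₁) + y₃·cos(t·y₁)) for t ∈ ℝ, and given y^{[0]} ∈ ℝ³ define recursively y^{[n]} = S_h(R_h(R_{σ₁Δ_n}(y^{[n-1]}))) for n ≥ 1. Then ‖y^{[n]}‖ ≤ (1+h)^n ‖y^{[0]}‖ for all n ≥ 0, where ‖·‖ denotes the Euclidean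 norm on ℝ³. (This is the pathwise bound on the splitting stochastic Poisson integrator for the stochastic Maxwell–Bloch system in the case σ₃ = 0, valid for any realization of the Wiener increments Δ_n.) -/
lemma euc3_norm (x : EuclideanSpace ℝ (Fin 3)) :
    ‖x‖ = Real.sqrt ((x 0)^2 + (x 1)^2 + (x 2)^2) := by
  rw [EuclideanSpace.norm_eq, Fin.sum_univ_three]
  simp [Real.norm_eq_abs, sq_abs]

/-- Pathwise bound for the splitting stochastic Poisson integrator for the stochastic
Maxwell–Bloch system with `σ₃ = 0`: with `y⁽ⁿ⁾ = S_h(R_h(R_{σ₁Δₙ}(y⁽ⁿ⁻¹⁾)))`, one has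
`‖y⁽ⁿ⁾‖ ≤ (1+h)ⁿ ‖y⁽⁰⁾‖` in the Euclidean norm, for any real numbers `Δₙ`. -/
theorem maxwell_bloch_splitting_scheme_pathwise_bound
    (h : ℝ) (hh : 0 < h) (σ₁ : ℝ) (hσ₁ : 0 ≤ σ₁) (Δ : ℕ → ℝ)
    (S R : ℝ → EuclideanSpace ℝ (Fin 3) → EuclideanSpace ℝ (Fin 3))
    (hS : ∀ (t : ℝ) (y : EuclideanSpace ℝ (Fin 3)),
      S t y 0 = y 0 + t * y 1 ∧ S t y 1 = y 1 ∧ S t y 2 = y 2)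
    (hR : ∀ (t : ℝ) (y : EuclideanSpace ℝ (Fin 3)),
      R t y 0 = y 0 ∧
      R t y 1 = y 1 * Real.cos (t * y 0) + y 2 * Real.sin (t * y 0) ∧
      R t y 2 = -(y 1) * Real.sin (t * y 0) + y 2 * Real.cos (t * y 0))
    (y : ℕ → EuclideanSpace ℝ (Fin 3))
    (hrec : ∀ n : ℕ, y (n + 1) = S h (R h (R (σ₁ * Δ (n + 1)) (y n)))) :
    ∀ n : ℕ, ‖y n‖ ≤ (1 + h) ^ n * ‖y 0‖ := by
  have hRnorm : ∀ (t : ℝ) (z : EuclideanSpace ℝ (Fin 3)), ‖R t z‖ = ‖z‖ := by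
    intro t z
    obtain ⟨h0, h1, h2⟩ := hR t z
    rw [euc3_norm, euc3_norm, h0, h1, h2]
    have hcs : Real.cos (t * z 0) ^ 2 + Real.sin (t * z 0) ^ 2 = 1 :=
      Real.cos_sq_add_sin_sq _
    congr 1
    nlinarith [hcs]
  have hSnorm : ∀ z : EuclideanSpace ℝ (Fin 3), ‖S h z‖ ≤ (1 + h) * ‖z‖ := by
    intro z
    obtain ⟨h0, h1, h2⟩ := hS h z
    rw [euc3_norm, euc3_norm, h0, h1, h2]
    rw [show (1 + h) * Real.sqrt ((z 0)^2 + (z 1)^2 + (z 2)^2)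
        = Real.sqrt ((1+h)^2 * ((z 0)^2 + (z 1)^2 + (z 2)^2)) by
      rw [Real.sqrt_mul (by positivity), Real.sqrt_sq (by linarith)]]
    apply Real.sqrt_le_sqrt
    nlinarith [mul_nonneg hh.le (sq_nonneg (z 0 - z 1)), mul_nonneg hh.le (sq_nonneg (z 2)),
      mul_nonneg hh.le (sq_nonneg (z 0)), mul_nonneg hh.le (sq_nonneg (z 1)),
      mul_nonneg (mul_nonneg hh.le hh.le) (sq_nonneg (z 0)),
      mul_nonneg (mul_nonneg hh.le hh.le) (sq_nonneg (z 2))]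
  intro n
  induction n with
  | zero => simp
  | succ n ih =>
      rw [hrec n]
      calc ‖S h (R h (R (σ₁ * Δ (n+1)) (y n)))‖
          ≤ (1 + h) * ‖R h (R (σ₁ * Δ (n+1)) (y n))‖ := hSnorm _
        _ = (1 + h) * ‖y n‖ := by rw [hRnorm, hRnorm]
        _ ≤ (1 + h) * ((1 + h) ^ n * ‖y 0‖) := by
            apply mul_le_mul_of_nonneg_left ih (by linarith)
        _ = (1 + h) ^ (n+1) * ‖y 0‖ := by ring
end

section
/- Let σ ∈ ℝ, T ≥ 0, let g : [0,T] → ℝ be an arbitrary function, and let y : [0,T] → ℝ³ be differentiable with y₁'(t) = y₂(t), y₂'(t) = y₁(t)·y₃(t)·(1 + σ·g(t)), and y₃'(t) = -y₁(t)·y₂(t)·(1 + σ·g(t)) for all t ∈ [0,T]. Then ‖y(t)‖ ≤ e^t ‖y(0)‖ for all t ∈ [0,T], where ‖·‖ denotes the Euclidean norm on ℝ³. (This is the bound on solutions of the Maxwell–Bloch system with σ₃ = 0 and arbitrary smooth perturbation of the Hamiltonian Ĥ₁ = ½y₁²; the key point is that d/dt ‖y(t)‖² = 2 y₁(t) y₂(t)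 ≤ ‖y(t)‖² independently of g.) -/
/-- Bound on solutions of the Maxwell–Bloch system with arbitrary smooth perturbation of
the Hamiltonian `Ĥ₁ = ½y₁²`: if `ẏ₁ = y₂`, `ẏ₂ = y₁y₃(1 + σg(t))`,
`ẏ₃ = -y₁y₂(1 + σg(t))` on `[0,T]`, then `‖y(t)‖ ≤ eᵗ ‖y(0)‖` (Euclidean norm). -/
theorem maxwell_bloch_perturbed_solution_bound
    (σ T : ℝ) (hT : 0 ≤ T) (g : ℝ → ℝ)
    (y : ℝ → EuclideanSpace ℝ (Fin 3))
    (hy : ∀ t ∈ Set.Icc (0 : ℝ) T,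
      HasDerivWithinAt (fun s => y s 0) (y t 1) (Set.Icc (0 : ℝ) T) t ∧
      HasDerivWithinAt (fun s => y s 1) (y t 0 * y t 2 * (1 + σ * g t))
        (Set.Icc (0 : ℝ) T) t ∧
      HasDerivWithinAt (fun s => y s 2) (-(y t 0 * y t 1) * (1 + σ * g t))
        (Set.Icc (0 : ℝ) T) t) :
    ∀ t ∈ Set.Icc (0 : ℝ) T, ‖y t‖ ≤ Real.exp t * ‖y 0‖ := by
  set f : ℝ → ℝ := fun t => (y t 0) ^ 2 + (y t 1) ^ 2 + (y t 2) ^ 2 with hf_def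
  have hf : ∀ t ∈ Set.Icc (0 : ℝ) T,
      HasDerivWithinAt f (2 * (y t 0 * y t 1)) (Set.Icc (0 : ℝ) T) t := by
    intro t ht
    obtain ⟨h1, h2, h3⟩ := hy t ht
    have := ((h1.pow 2).add (h2.pow 2)).add (h3.pow 2)
    refine this.congr_deriv ?_
    ring
  set φ : ℝ → ℝ := fun t => f t * Real.exp (-2 * t) with hφ_def
  have hφ : ∀ t ∈ Set.Icc (0 : ℝ) T,
      HasDerivWithinAt φ ((2 * (y t 0 * y t 1) - 2 * f t) * Real.exp (-2 * t))
        (Set.Icc (0 : ℝ) T) t := by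
    intro t ht
    have he : HasDerivWithinAt (fun s : ℝ => Real.exp (-2 * s))
        (-2 * Real.exp (-2 * t)) (Set.Icc (0 : ℝ) T) t := by
      have := ((hasDerivAt_id t).const_mul (-2 : ℝ)).exp.hasDerivWithinAt
        (s := Set.Icc (0 : ℝ) T)
      simp only [id_eq] at this
      refine this.congr_deriv ?_
      ring
    have := (hf t ht).mul he
    refine this.congr_deriv ?_
    ring
  have hanti : AntitoneOn φ (Set.Icc 0 T) := by
    apply antitoneOn_of_deriv_nonpos (convex_Icc 0 T)
    · intro t ht
      exact (hφ t ht).continuousWithinAt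
    · intro x hx
      rw [interior_Icc] at hx
      exact (((hφ x (Set.Ioo_subset_Icc_self hx)).hasDerivAt
        (Icc_mem_nhds hx.1 hx.2)).differentiableAt).differentiableWithinAt
    · intro x hx
      rw [interior_Icc] at hx
      have hd := (hφ x (Set.Ioo_subset_Icc_self hx)).hasDerivAt
        (Icc_mem_nhds hx.1 hx.2)
      rw [hd.deriv]
      apply mul_nonpos_of_nonpos_of_nonneg _ (Real.exp_nonneg _)
      have hfx : f x = (y x 0) ^ 2 + (y x 1) ^ 2 + (y x 2) ^ 2 := rfl
      nlinarith [sq_nonneg (y x 0 - y x 1), sq_nonneg (y x 2)]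
  intro t ht
  have h0 : (0 : ℝ) ∈ Set.Icc (0 : ℝ) T := ⟨le_refl _, hT⟩
  have hφt : φ t ≤ φ 0 := hanti h0 ht ht.1
  have hft : f t ≤ Real.exp (2 * t) * f 0 := by
    have h1 : φ 0 = f 0 := by simp [hφ_def]
    have h2 : Real.exp (-2 * t) * Real.exp (2 * t) = 1 := by
      rw [← Real.exp_add]; norm_num
    have h3 := mul_le_mul_of_nonneg_right hφt (Real.exp_nonneg (2 * t))
    simp only [hφ_def] at h3
    calc f t = f t * Real.exp (-2 * t) * Real.exp (2 * t) := by
            rw [mul_assoc, h2, mul_one]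
      _ ≤ f 0 * Real.exp (-2 * 0) * Real.exp (2 * t) := h3
      _ = Real.exp (2 * t) * f 0 := by norm_num; ring
  have hn : ∀ s : ℝ, ‖y s‖ = Real.sqrt (f s) := by
    intro s
    rw [EuclideanSpace.norm_eq]
    congr 1
    simp [Fin.sum_univ_three, Real.norm_eq_abs, sq_abs, hf_def]
  rw [hn t, hn 0]
  have : Real.sqrt (f t) ≤ Real.sqrt (Real.exp (2 * t) * f 0) :=
    Real.sqrt_le_sqrt hft
  refine this.trans_eq ?_
  rw [Real.sqrt_mul (Real.exp_nonneg _)]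
  congr 1
  rw [two_mul, Real.exp_add, Real.sqrt_mul_self (Real.exp_nonneg t)]
end

section
/- Fix h > 0 and a sequence of real numbers (w_n)_{n≥1}. For each ε > 0 define the sequence (ξ^ε_n)_{n≥0} by ξ^ε_0 = 0 and ξ^ε_n = (ξ^ε_{n-1} + w_n/ε)/(1 + h/ε²) for n ≥ 1. Then for every n ≥ 1: (i) the identity h·ξ^ε_n/ε = w_n + ε·(ξ^ε_{n-1} - ξ^ε_n) holds; (ii) ε·ξ^ε_n → 0 as ε → 0⁺; and consequently (iii) h·ξ^ε_n/ε → w_n as ε → 0⁺. -/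
/-!
Multiplying the scheme by `ε` gives `ε ξₙ = ε² (ε ξₙ₋₁ + wₙ) / (ε² + h)`, so `ε ξₙ → 0`
by induction from `ξ₀ = 0`, the denominator tending to `h > 0`. Identity (i) is the scheme
with the denominator cleared, and its right-hand side `wₙ + ε ξₙ₋₁ - ε ξₙ` then tends to `wₙ`.
-/

open Filter Topology

noncomputable def implicitEulerStep (h ε y w : ℝ) : ℝ :=
  (y + w / ε) / (1 + h / ε ^ 2)

section implicitEulerStep

variable {h ε : ℝ} (y w : ℝ)

lemma mul_implicitEulerStep_div (hh : 0 ≤ h) (hε : ε ≠ 0) :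
    h * implicitEulerStep h ε y w / ε = w + ε * (y - implicitEulerStep h ε y w) := by
  have hd : 1 + h / ε ^ 2 ≠ 0 := by positivity
  unfold implicitEulerStep
  field_simp
  ring

lemma mul_implicitEulerStep (hh : 0 ≤ h) (hε : ε ≠ 0) :
    ε * implicitEulerStep h ε y w = ε ^ 2 * (ε * y + w) / (ε ^ 2 + h) := by
  have hd : ε ^ 2 + h ≠ 0 := by positivity
  unfold implicitEulerStep
  field_simp

end implicitEulerStep

lemma tendsto_mul_implicitEulerStep {h : ℝ} (hh : 0 < h) (w : ℝ) {y : ℝ → ℝ}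
    (hy : Tendsto (fun ε => ε * y ε) (𝓝[>] 0) (𝓝 0)) :
    Tendsto (fun ε => ε * implicitEulerStep h ε (y ε) w) (𝓝[>] 0) (𝓝 0) := by
  have hε : Tendsto (fun ε : ℝ => ε) (𝓝[>] 0) (𝓝 0) := tendsto_nhdsWithin_of_tendsto_nhds tendsto_id
  have hlim : Tendsto (fun ε => ε ^ 2 * (ε * y ε + w) / (ε ^ 2 + h)) (𝓝[>] 0)
      (𝓝 (0 ^ 2 * (0 + w) / (0 ^ 2 + h))) :=
    ((hε.pow 2).mul (hy.add tendsto_const_nhds)).div ((hε.pow 2).add tendsto_const_nhds)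
      (by positivity)
  rw [zero_pow two_ne_zero, zero_mul, zero_div] at hlim
  refine hlim.congr' (eventually_nhdsWithin_of_forall fun ε hε => ?_)
  exact (mul_implicitEulerStep (y ε) w hh.le (ne_of_gt hε)).symm

/-- The implicit Euler discretisation `ξₙᵉ = (ξₙ₋₁ᵉ + wₙ/ε)/(1 + h/ε²)` of the
Ornstein–Uhlenbeck process satisfies, for every `n ≥ 1`:
(i) `h ξₙᵉ/ε = wₙ + ε(ξₙ₋₁ᵉ - ξₙᵉ)`, (ii) `ε ξₙᵉ → 0` as `ε → 0⁺`, and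
(iii) `h ξₙᵉ/ε → wₙ` as `ε → 0⁺`. -/
theorem implicit_euler_OU_asymptotic_preserving
    (h : ℝ) (hh : 0 < h) (w : ℕ → ℝ)
    (ξ : ℝ → ℕ → ℝ)
    (hξ0 : ∀ ε : ℝ, ξ ε 0 = 0)
    (hξ : ∀ ε > (0 : ℝ), ∀ n : ℕ,
      ξ ε (n + 1) = (ξ ε n + w (n + 1) / ε) / (1 + h / ε ^ 2)) :
    ∀ n : ℕ,
      (∀ ε > (0 : ℝ),
        h * ξ ε (n + 1) / ε = w (n + 1) + ε * (ξ ε n - ξ ε (n + 1))) ∧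
      Filter.Tendsto (fun ε => ε * ξ ε (n + 1))
        (nhdsWithin 0 (Set.Ioi 0)) (nhds 0) ∧
      Filter.Tendsto (fun ε => h * ξ ε (n + 1) / ε)
        (nhdsWithin 0 (Set.Ioi 0)) (nhds (w (n + 1))) := by
  have scaled_tendsto_zero : ∀ n, Tendsto (fun ε => ε * ξ ε n) (𝓝[>] 0) (𝓝 0) := by
    intro n
    induction n with
    | zero => simpa only [hξ0, mul_zero] using tendsto_const_nhds
    | succ n ih =>
      refine (tendsto_mul_implicitEulerStep hh (w (n + 1)) ih).congr'
        (eventually_nhdsWithin_of_forall fun ε hε => ?_)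
      simp only [hξ ε hε n, implicitEulerStep]
  intro n
  have identity : ∀ ε > (0 : ℝ),
      h * ξ ε (n + 1) / ε = w (n + 1) + ε * (ξ ε n - ξ ε (n + 1)) := fun ε hε => by
    rw [hξ ε hε n]
    exact mul_implicitEulerStep_div (ξ ε n) (w (n + 1)) hh.le (ne_of_gt hε)
  refine ⟨identity, scaled_tendsto_zero (n + 1), ?_⟩
  have hlim : Tendsto (fun ε => w (n + 1) + (ε * ξ ε n - ε * ξ ε (n + 1))) (𝓝[>] 0)
      (𝓝 (w (n + 1) + (0 - 0))) :=
    tendsto_const_nhds.add ((scaled_tendsto_zero n).sub (scaled_tendsto_zero (n + 1)))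
  rw [sub_self, add_zero] at hlim
  refine hlim.congr' (eventually_nhdsWithin_of_forall fun ε hε => ?_)
  simp only [identity ε hε, mul_sub]
end

section
/- Fix h > 0, σ₁, σ₃ ≥ 0, y⁰ ∈ ℝ³, and two sequences of real numbers (w¹_n)_{n≥1} and (w³_n)_{n≥1}. Define S_t(y) = (y₁ + t·y₂, y₂, y₃) and R_t(y) = (y₁, y₂·cos(t·y₁) + y₃·sin(t·y₁), -y₂·sin(t·y₁) + y₃·cos(t·y₁)). For ε > 0, let ξ^ε_{k,0} = 0 and ξ^ε_{k,n} = (ξ^ε_{k,n-1} + w^k_n/ε)/(1 + h/ε²) for k ∈ {1,3}, and define recursively y^{ε,[0]} = y⁰ and y^{ε,[n]} = S_h(R_h(S_{σ₃·h·ξ^ε_{3,n}/ε}(R_{σ₁·h·ξ^ε_{1,n}/ε}(y^{ε,[n-1]})))). Define also the limit scheme y^{[0]} = y⁰ and y^{[n]} = S_h(R_h(S_{σ₃ w³_n}(R_{σ₁ w¹_n}(y^{[n-1]})))). Then for every n ≥ 0, y^{ε,[n]} → y^{[n]} as ε → 0⁺. (This is the pathwise asymptotic preserving property of the splitting scheme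 for the multiscale stochastic Maxwell–Bloch system: for fixed step size h, the scheme for the multiscale system converges, as ε → 0, to the splitting stochastic Poisson integrator for the limiting Stratonovich system.) -/
open Filter

private lemma tendsto_eps_xi (h : ℝ) (hh : 0 < h) (w : ℕ → ℝ) (ξ : ℝ → ℕ → ℝ)
    (hξ0 : ∀ ε : ℝ, ξ ε 0 = 0)
    (hrec : ∀ ε > (0 : ℝ), ∀ n : ℕ,
      ξ ε (n + 1) = (ξ ε n + w (n + 1) / ε) / (1 + h / ε ^ 2)) :
    ∀ n : ℕ, Tendsto (fun ε => ε * ξ ε n) (nhdsWithin 0 (Set.Ioi 0)) (nhds 0) := by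
  have hid : Tendsto (fun ε : ℝ => ε) (nhdsWithin 0 (Set.Ioi 0)) (nhds 0) :=
    tendsto_id.mono_left nhdsWithin_le_nhds
  intro n
  induction n with
  | zero =>
      simp only [hξ0, mul_zero]
      exact tendsto_const_nhds
  | succ n ih =>
      have heq : ∀ ε ∈ Set.Ioi (0 : ℝ),
          ε * ξ ε (n + 1) = (ε * ξ ε n + w (n + 1)) * (ε ^ 2 / (ε ^ 2 + h)) := by
        intro ε hε
        have hε0 : ε ≠ 0 := ne_of_gt hε
        have hden : ε ^ 2 + h ≠ 0 := by positivity
        rw [hrec ε hε n]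
        field_simp
      have hT : Tendsto (fun ε => (ε * ξ ε n + w (n + 1)) * (ε ^ 2 / (ε ^ 2 + h)))
          (nhdsWithin 0 (Set.Ioi 0)) (nhds ((0 + w (n + 1)) * (0 ^ 2 / (0 ^ 2 + h)))) := by
        have hsq : Tendsto (fun ε : ℝ => ε ^ 2) (nhdsWithin 0 (Set.Ioi 0)) (nhds (0 ^ 2)) :=
          hid.pow 2
        exact (ih.add tendsto_const_nhds).mul
          (hsq.div (hsq.add tendsto_const_nhds) (by simpa using ne_of_gt hh))
      have : ((0 : ℝ) + w (n + 1)) * (0 ^ 2 / (0 ^ 2 + h)) = 0 := by simp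
      rw [this] at hT
      exact hT.congr' (by filter_upwards [self_mem_nhdsWithin] with ε hε
        using (heq ε hε).symm)

private lemma tendsto_hxi (h : ℝ) (hh : 0 < h) (w : ℕ → ℝ) (ξ : ℝ → ℕ → ℝ)
    (hξ0 : ∀ ε : ℝ, ξ ε 0 = 0)
    (hrec : ∀ ε > (0 : ℝ), ∀ n : ℕ,
      ξ ε (n + 1) = (ξ ε n + w (n + 1) / ε) / (1 + h / ε ^ 2)) (n : ℕ) :
    Tendsto (fun ε => h * ξ ε (n + 1) / ε) (nhdsWithin 0 (Set.Ioi 0)) (nhds (w (n + 1))) := by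
  have hid : Tendsto (fun ε : ℝ => ε) (nhdsWithin 0 (Set.Ioi 0)) (nhds 0) :=
    tendsto_id.mono_left nhdsWithin_le_nhds
  have heq : ∀ ε ∈ Set.Ioi (0 : ℝ),
      h * ξ ε (n + 1) / ε = h * (ε * ξ ε n + w (n + 1)) / (ε ^ 2 + h) := by
    intro ε hε
    have hε0 : ε ≠ 0 := ne_of_gt hε
    have hden : ε ^ 2 + h ≠ 0 := by positivity
    rw [hrec ε hε n]
    field_simp
  have hsq : Tendsto (fun ε : ℝ => ε ^ 2) (nhdsWithin 0 (Set.Ioi 0)) (nhds (0 ^ 2)) :=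
    hid.pow 2
  have hT : Tendsto (fun ε => h * (ε * ξ ε n + w (n + 1)) / (ε ^ 2 + h))
      (nhdsWithin 0 (Set.Ioi 0)) (nhds (h * (0 + w (n + 1)) / (0 ^ 2 + h))) :=
    (tendsto_const_nhds.mul ((tendsto_eps_xi h hh w ξ hξ0 hrec n).add tendsto_const_nhds)).div
      (hsq.add tendsto_const_nhds) (by simpa using ne_of_gt hh)
  have : h * (0 + w (n + 1)) / (0 ^ 2 + h) = w (n + 1) := by
    field_simp
    ring
  rw [this] at hT
  exact hT.congr' (by filter_upwards [self_mem_nhdsWithin] with ε hε using (heq ε hε).symm)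

private lemma tendsto_S_comp {F : Filter ℝ} (S : ℝ → (Fin 3 → ℝ) → Fin 3 → ℝ)
    (hS : ∀ t y, S t y = ![y 0 + t * y 1, y 1, y 2])
    {a : ℝ → ℝ} {t₀ : ℝ} {y : ℝ → Fin 3 → ℝ} {y₀ : Fin 3 → ℝ}
    (ha : Tendsto a F (nhds t₀)) (hy : Tendsto y F (nhds y₀)) :
    Tendsto (fun ε => S (a ε) (y ε)) F (nhds (S t₀ y₀)) := by
  have h0 := tendsto_pi_nhds.mp hy 0
  have h1 := tendsto_pi_nhds.mp hy 1
  have h2 := tendsto_pi_nhds.mp hy 2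
  simp only [hS]
  rw [tendsto_pi_nhds]
  intro i
  fin_cases i <;>
    simp only [Matrix.cons_val_zero, Matrix.cons_val_one, Matrix.head_cons, Fin.mk_one,
      Matrix.cons_val_two, Matrix.tail_cons, Fin.isValue]
  · exact h0.add (ha.mul h1)
  · exact h1
  · exact h2

private lemma tendsto_R_comp {F : Filter ℝ} (R : ℝ → (Fin 3 → ℝ) → Fin 3 → ℝ)
    (hR : ∀ t y, R t y = ![y 0,
      y 1 * Real.cos (t * y 0) + y 2 * Real.sin (t * y 0),
      -(y 1) * Real.sin (t * y 0) + y 2 * Real.cos (t * y 0)])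
    {a : ℝ → ℝ} {t₀ : ℝ} {y : ℝ → Fin 3 → ℝ} {y₀ : Fin 3 → ℝ}
    (ha : Tendsto a F (nhds t₀)) (hy : Tendsto y F (nhds y₀)) :
    Tendsto (fun ε => R (a ε) (y ε)) F (nhds (R t₀ y₀)) := by
  have h0 := tendsto_pi_nhds.mp hy 0
  have h1 := tendsto_pi_nhds.mp hy 1
  have h2 := tendsto_pi_nhds.mp hy 2
  have hcos : Tendsto (fun ε => Real.cos (a ε * y ε 0)) F (nhds (Real.cos (t₀ * y₀ 0))) :=
    (Real.continuous_cos.tendsto _).comp (ha.mul h0)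
  have hsin : Tendsto (fun ε => Real.sin (a ε * y ε 0)) F (nhds (Real.sin (t₀ * y₀ 0))) :=
    (Real.continuous_sin.tendsto _).comp (ha.mul h0)
  simp only [hR]
  rw [tendsto_pi_nhds]
  intro i
  fin_cases i <;>
    simp only [Matrix.cons_val_zero, Matrix.cons_val_one, Matrix.head_cons, Fin.mk_one,
      Matrix.cons_val_two, Matrix.tail_cons, Fin.isValue]
  · exact h0
  · exact (h1.mul hcos).add (h2.mul hsin)
  · exact ((h1.neg).mul hsin).add (h2.mul hcos)

/-- Pathwise asymptotic preserving property of the splitting scheme for the multiscale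
stochastic Maxwell–Bloch system: for each fixed step size `h`, as `ε → 0⁺` the scheme
for the multiscale system converges to the splitting stochastic Poisson integrator of
the limiting Stratonovich system. -/
theorem maxwell_bloch_splitting_scheme_asymptotic_preserving
    (h : ℝ) (hh : 0 < h) (σ₁ σ₃ : ℝ) (hσ₁ : 0 ≤ σ₁) (hσ₃ : 0 ≤ σ₃)
    (y₀ : Fin 3 → ℝ) (w₁ w₃ : ℕ → ℝ)
    (S R : ℝ → (Fin 3 → ℝ) → Fin 3 → ℝ)
    (hS : ∀ t y, S t y = ![y 0 + t * y 1, y 1, y 2])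
    (hR : ∀ t y, R t y = ![y 0,
      y 1 * Real.cos (t * y 0) + y 2 * Real.sin (t * y 0),
      -(y 1) * Real.sin (t * y 0) + y 2 * Real.cos (t * y 0)])
    (ξ₁ ξ₃ : ℝ → ℕ → ℝ)
    (hξ₁0 : ∀ ε : ℝ, ξ₁ ε 0 = 0) (hξ₃0 : ∀ ε : ℝ, ξ₃ ε 0 = 0)
    (hξ₁ : ∀ ε > (0 : ℝ), ∀ n : ℕ,
      ξ₁ ε (n + 1) = (ξ₁ ε n + w₁ (n + 1) / ε) / (1 + h / ε ^ 2))
    (hξ₃ : ∀ ε > (0 : ℝ), ∀ n : ℕ,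
      ξ₃ ε (n + 1) = (ξ₃ ε n + w₃ (n + 1) / ε) / (1 + h / ε ^ 2))
    (yε : ℝ → ℕ → Fin 3 → ℝ)
    (hyε0 : ∀ ε : ℝ, yε ε 0 = y₀)
    (hyε : ∀ ε > (0 : ℝ), ∀ n : ℕ, yε ε (n + 1) =
      S h (R h (S (σ₃ * h * ξ₃ ε (n + 1) / ε)
        (R (σ₁ * h * ξ₁ ε (n + 1) / ε) (yε ε n)))))
    (ylim : ℕ → Fin 3 → ℝ)
    (hylim0 : ylim 0 = y₀)
    (hylim : ∀ n : ℕ, ylim (n + 1) =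
      S h (R h (S (σ₃ * w₃ (n + 1)) (R (σ₁ * w₁ (n + 1)) (ylim n))))) :
    ∀ n : ℕ, Filter.Tendsto (fun ε => yε ε n)
      (nhdsWithin 0 (Set.Ioi 0)) (nhds (ylim n)) := by
  intro n
  induction n with
  | zero =>
      simp only [hyε0, hylim0]
      exact tendsto_const_nhds
  | succ n ih =>
      have ha1 : Tendsto (fun ε => σ₁ * h * ξ₁ ε (n + 1) / ε)
          (nhdsWithin 0 (Set.Ioi 0)) (nhds (σ₁ * w₁ (n + 1))) := by
        have := (tendsto_const_nhds (x := σ₁)).mul (tendsto_hxi h hh w₁ ξ₁ hξ₁0 hξ₁ n)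
        refine this.congr (fun ε => ?_)
        ring
      have ha3 : Tendsto (fun ε => σ₃ * h * ξ₃ ε (n + 1) / ε)
          (nhdsWithin 0 (Set.Ioi 0)) (nhds (σ₃ * w₃ (n + 1))) := by
        have := (tendsto_const_nhds (x := σ₃)).mul (tendsto_hxi h hh w₃ ξ₃ hξ₃0 hξ₃ n)
        refine this.congr (fun ε => ?_)
        ring
      have key : Tendsto (fun ε => S h (R h (S (σ₃ * h * ξ₃ ε (n + 1) / ε)
            (R (σ₁ * h * ξ₁ ε (n + 1) / ε) (yε ε n)))))
          (nhdsWithin 0 (Set.Ioi 0))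
          (nhds (S h (R h (S (σ₃ * w₃ (n + 1)) (R (σ₁ * w₁ (n + 1)) (ylim n)))))) :=
        tendsto_S_comp S hS tendsto_const_nhds
          (tendsto_R_comp R hR tendsto_const_nhds
            (tendsto_S_comp S hS ha3
              (tendsto_R_comp R hR ha1 ih)))
      rw [hylim]
      exact key.congr' (by filter_upwards [self_mem_nhdsWithin] with ε hε
        using (hyε ε hε n).symm)
end
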